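/- arXiv:1403.2769 — 6 statements merged into one kernel-verified Lean document; each statement's English description precedes it below -/
import Mathlib

section
/- Let f : ℕ → ℂ be a multiplicative function and G a graph. Then the function g_{f,G}(m) = Σ_{N_1·N_2·⋯·N_v = m} f(n_1)⋯f(n_e), where the sum extends over all edge numberings (n_a)_{a∈E} of G whose associated vertex numbering (N_r) satisfies N_1⋯N_v = m, is a multiplicative function of m. -/
open scoped BigOperators Classical

noncomputable section

/-- The vertex numbering `N_r` associated to an edge numbering `n` of the graph with
vertex set `Fin v` and edge set `E`: the lcm of `n a` over the edges `a` incident to `r`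
(equal to `1` if `r` is isolated). -/
def vertexNum (v : ℕ) (E : Finset (Sym2 (Fin v))) (n : {a : Sym2 (Fin v) // a ∈ E} → ℕ+)
    (r : Fin v) : ℕ :=
  (E.attach.filter fun a => r ∈ a.1).lcm fun a => (n a : ℕ)

/-- `g_{f,G}(m) = Σ_{N_1 ⋯ N_v = m} f(n_1) ⋯ f(n_e)`, the sum extending over all edge
numberings of the graph whose associated vertex numbering has product `m`. -/
def gfG (v : ℕ) (E : Finset (Sym2 (Fin v))) (f : ℕ → ℂ) (m : ℕ) : ℂ :=
  ∑ᶠ n : {a : Sym2 (Fin v) // a ∈ E} → ℕ+,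
    if ∏ r, vertexNum v E n r = m then ∏ a, f (n a : ℕ) else 0

/-! For coprime `m₁, m₂`, an edge numbering with values dividing `m₁ m₂` is the
same as a pair of numberings with values dividing `m₁` and `m₂` respectively (split each
value as `gcd(n, m₁) · gcd(n, m₂)`). The lcm defining `N_r` splits along this factorization,
as does `f(n_1) ⋯ f(n_e)`, and the condition `∏ N_r = m₁ m₂` splits into the two conditions
`∏ N_r = m₁` and `∏ N_r = m₂`. -/

namespace Nat.Coprime

theorem finset_lcm_mul {ι : Type*} {s : Finset ι} {x y : ι → ℕ}
    (h : Nat.Coprime (s.lcm x) (s.lcm y)) :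
    (s.lcm fun i => x i * y i) = s.lcm x * s.lcm y :=
  Nat.dvd_antisymm
    (Finset.lcm_dvd fun _ hi => mul_dvd_mul (Finset.dvd_lcm hi) (Finset.dvd_lcm hi))
    (h.mul_dvd_of_dvd_of_dvd
      (Finset.lcm_dvd fun _ hi => (Nat.dvd_mul_right _ _).trans (Finset.dvd_lcm hi))
      (Finset.lcm_dvd fun _ hi => (Nat.dvd_mul_left _ _).trans (Finset.dvd_lcm hi)))

theorem mul_eq_mul_iff {A B m₁ m₂ : ℕ} (hA : Nat.Coprime A m₂) (hB : Nat.Coprime B m₁) :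
    A * B = m₁ * m₂ ↔ A = m₁ ∧ B = m₂ := by
  constructor
  · intro hAB
    have hm₁ : m₁ ∣ A * B := hAB ▸ Nat.dvd_mul_right m₁ m₂
    have hm₂ : m₂ ∣ A * B := hAB ▸ Nat.dvd_mul_left m₂ m₁
    have hA' : A ∣ m₁ * m₂ := hAB ▸ Nat.dvd_mul_right A B
    have hB' : B ∣ m₁ * m₂ := hAB ▸ Nat.dvd_mul_left B A
    exact ⟨Nat.dvd_antisymm (hA.dvd_of_dvd_mul_right hA') (hB.symm.dvd_of_dvd_mul_right hm₁),
      Nat.dvd_antisymm (hB.dvd_of_dvd_mul_left hB') (hA.symm.dvd_of_dvd_mul_left hm₂)⟩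
  · rintro ⟨rfl, rfl⟩
    rfl

theorem gcd_mul_gcd_of_dvd_mul {m₁ m₂ d : ℕ} (h : Nat.Coprime m₁ m₂) (hd : d ∣ m₁ * m₂) :
    Nat.gcd d m₁ * Nat.gcd d m₂ = d := by
  rw [← h.gcd_mul d, Nat.gcd_eq_left hd]

end Nat.Coprime

section EdgeNumbering

variable {v : ℕ} {E : Finset (Sym2 (Fin v))}

theorem vertexNum_pos (n : E → ℕ+) (r : Fin v) : 0 < vertexNum v E n r :=
  Nat.pos_of_ne_zero fun h0 => by
    obtain ⟨a, -, ha⟩ := Finset.lcm_eq_zero_iff.mp h0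
    exact (n a).ne_zero ha

theorem dvd_vertexNum (n : E → ℕ+) {a : E} {r : Fin v} (hr : r ∈ a.1) :
    (n a : ℕ) ∣ vertexNum v E n r :=
  Finset.dvd_lcm (Finset.mem_filter.mpr ⟨Finset.mem_attach _ _, hr⟩)

theorem vertexNum_dvd {n : E → ℕ+} {m : ℕ} (h : ∀ a, (n a : ℕ) ∣ m) (r : Fin v) :
    vertexNum v E n r ∣ m :=
  Finset.lcm_dvd fun a _ => h a

theorem dvd_prod_vertexNum (n : E → ℕ+) (a : E) : (n a : ℕ) ∣ ∏ r, vertexNum v E n r :=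
  (dvd_vertexNum n (Sym2.out_fst_mem a.1)).trans (Finset.dvd_prod_of_mem _ (Finset.mem_univ _))

theorem vertexNum_mul {m₁ m₂ : ℕ} (h : Nat.Coprime m₁ m₂) {n₁ n₂ : E → ℕ+}
    (h₁ : ∀ a, (n₁ a : ℕ) ∣ m₁) (h₂ : ∀ a, (n₂ a : ℕ) ∣ m₂) (r : Fin v) :
    vertexNum v E (n₁ * n₂) r = vertexNum v E n₁ r * vertexNum v E n₂ r := by
  have hcop : Nat.Coprime (vertexNum v E n₁ r) (vertexNum v E n₂ r) :=
    (h.coprime_dvd_left (vertexNum_dvd h₁ r)).coprime_dvd_right (vertexNum_dvd h₂ r)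
  simpa only [vertexNum, Pi.mul_apply, PNat.mul_coe] using Nat.Coprime.finset_lcm_mul hcop

theorem coprime_prod_vertexNum {m₁ m₂ : ℕ} (h : Nat.Coprime m₁ m₂) {n : E → ℕ+}
    (hn : ∀ a, (n a : ℕ) ∣ m₁) : Nat.Coprime (∏ r, vertexNum v E n r) m₂ :=
  Nat.Coprime.prod_left fun r _ => h.coprime_dvd_left (vertexNum_dvd hn r)

def divisorNumberings (ι : Type*) [Fintype ι] (m : ℕ) : Finset (ι → ℕ+) :=
  Fintype.piFinset fun _ => m.divisors.preimage ((↑) : ℕ+ → ℕ) PNat.coe_injective.injOn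

theorem mem_divisorNumberings {ι : Type*} [Fintype ι] {m : ℕ} (hm : m ≠ 0) {n : ι → ℕ+} :
    n ∈ divisorNumberings ι m ↔ ∀ i, (n i : ℕ) ∣ m := by
  simp [divisorNumberings, hm]

theorem sum_divisorNumberings_mul {ι M : Type*} [Fintype ι] [AddCommMonoid M]
    {m₁ m₂ : ℕ} (h : Nat.Coprime m₁ m₂) (hm₁ : m₁ ≠ 0) (hm₂ : m₂ ≠ 0) (g : (ι → ℕ+) → M) :
    ∑ n ∈ divisorNumberings ι (m₁ * m₂), g n =
      ∑ n₁ ∈ divisorNumberings ι m₁, ∑ n₂ ∈ divisorNumberings ι m₂, g (n₁ * n₂) := by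
  rw [← Finset.sum_product']
  symm
  refine Finset.sum_nbij' (fun p => p.1 * p.2)
    (fun n => (fun i => ⟨Nat.gcd (n i) m₁, Nat.gcd_pos_of_pos_left _ (n i).pos⟩,
      fun i => ⟨Nat.gcd (n i) m₂, Nat.gcd_pos_of_pos_left _ (n i).pos⟩)) ?_ ?_ ?_ ?_ ?_
  · simp only [Finset.mem_product, mem_divisorNumberings hm₁, mem_divisorNumberings hm₂,
      mem_divisorNumberings (mul_ne_zero hm₁ hm₂), Pi.mul_apply, PNat.mul_coe]
    exact fun p hp i => mul_dvd_mul (hp.1 i) (hp.2 i)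
  · exact fun n _ => Finset.mem_product.mpr
      ⟨(mem_divisorNumberings hm₁).mpr fun i => Nat.gcd_dvd_right _ _,
        (mem_divisorNumberings hm₂).mpr fun i => Nat.gcd_dvd_right _ _⟩
  · simp only [Finset.mem_product, mem_divisorNumberings hm₁, mem_divisorNumberings hm₂]
    rintro ⟨n₁, n₂⟩ ⟨h₁, h₂⟩
    refine Prod.ext (funext fun i => PNat.coe_injective ?_) (funext fun i => PNat.coe_injective ?_)
    · change Nat.gcd (n₁ i * n₂ i) m₁ = n₁ i
      rw [Nat.Coprime.gcd_mul_right_cancel _ (h.symm.coprime_dvd_left (h₂ i)),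
        Nat.gcd_eq_left (h₁ i)]
    · change Nat.gcd (n₁ i * n₂ i) m₂ = n₂ i
      rw [Nat.Coprime.gcd_mul_left_cancel _ (h.coprime_dvd_left (h₁ i)),
        Nat.gcd_eq_left (h₂ i)]
  · simp only [mem_divisorNumberings (mul_ne_zero hm₁ hm₂)]
    exact fun n hn => funext fun i => PNat.coe_injective (h.gcd_mul_gcd_of_dvd_mul (hn i))
  · exact fun _ _ => rfl

end EdgeNumbering

section Summand

variable (v : ℕ) (E : Finset (Sym2 (Fin v))) (f : ℕ → ℂ)

def gfGSummand (m : ℕ) (n : E → ℕ+) : ℂ :=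
  if ∏ r, vertexNum v E n r = m then ∏ a, f (n a : ℕ) else 0

theorem gfG_eq_sum {m : ℕ} (hm : m ≠ 0) :
    gfG v E f m = ∑ n ∈ divisorNumberings E m, gfGSummand v E f m n := by
  refine finsum_eq_sum_of_support_subset _ fun n hn => ?_
  have hprod : ∏ r, vertexNum v E n r = m := of_not_not fun hne => hn (if_neg hne)
  exact (mem_divisorNumberings hm).mpr fun a => hprod ▸ dvd_prod_vertexNum n a

theorem gfG_zero : gfG v E f 0 = 0 := by
  have hterm (n : E → ℕ+) : gfGSummand v E f 0 n = 0 :=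
    if_neg (Finset.prod_pos fun r _ => vertexNum_pos n r).ne'
  exact (finsum_congr hterm).trans finsum_zero

variable {v E f}

theorem gfGSummand_mul (hf : ∀ m₁ m₂ : ℕ, Nat.Coprime m₁ m₂ → f (m₁ * m₂) = f m₁ * f m₂)
    {m₁ m₂ : ℕ} (h : Nat.Coprime m₁ m₂) {n₁ n₂ : E → ℕ+}
    (h₁ : ∀ a, (n₁ a : ℕ) ∣ m₁) (h₂ : ∀ a, (n₂ a : ℕ) ∣ m₂) :
    gfGSummand v E f (m₁ * m₂) (n₁ * n₂) = gfGSummand v E f m₁ n₁ * gfGSummand v E f m₂ n₂ := by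
  have hN : ∏ r, vertexNum v E (n₁ * n₂) r =
      (∏ r, vertexNum v E n₁ r) * ∏ r, vertexNum v E n₂ r := by
    rw [← Finset.prod_mul_distrib]
    exact Finset.prod_congr rfl fun r _ => vertexNum_mul h h₁ h₂ r
  have hF : ∏ a, f ((n₁ * n₂) a : ℕ) = (∏ a, f (n₁ a : ℕ)) * ∏ a, f (n₂ a : ℕ) := by
    rw [← Finset.prod_mul_distrib]
    refine Finset.prod_congr rfl fun a _ => ?_
    rw [Pi.mul_apply, PNat.mul_coe]
    exact hf _ _ ((h.coprime_dvd_left (h₁ a)).coprime_dvd_right (h₂ a))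
  rw [gfGSummand, gfGSummand, gfGSummand, ite_zero_mul_ite_zero, hN, hF]
  exact if_congr (Nat.Coprime.mul_eq_mul_iff (coprime_prod_vertexNum h h₁)
    (coprime_prod_vertexNum h.symm h₂)) rfl rfl

end Summand

theorem stmt1_general (v : ℕ) (E : Finset (Sym2 (Fin v)))
    (f : ℕ → ℂ) (hf : ∀ m₁ m₂ : ℕ, Nat.Coprime m₁ m₂ → f (m₁ * m₂) = f m₁ * f m₂) :
    ∀ m₁ m₂ : ℕ, Nat.Coprime m₁ m₂ →
      gfG v E f (m₁ * m₂) = gfG v E f m₁ * gfG v E f m₂ := by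
  intro m₁ m₂ h
  rcases eq_or_ne m₁ 0 with rfl | hm₁
  · simp [Nat.coprime_zero_left _ |>.mp h, gfG_zero]
  rcases eq_or_ne m₂ 0 with rfl | hm₂
  · simp [Nat.coprime_zero_right _ |>.mp h, gfG_zero]
  rw [gfG_eq_sum v E f hm₁, gfG_eq_sum v E f hm₂, gfG_eq_sum v E f (mul_ne_zero hm₁ hm₂),
    sum_divisorNumberings_mul h hm₁ hm₂, Finset.sum_mul_sum]
  refine Finset.sum_congr rfl fun n₁ hn₁ => Finset.sum_congr rfl fun n₂ hn₂ => ?_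
  exact gfGSummand_mul hf h ((mem_divisorNumberings hm₁).mp hn₁)
    ((mem_divisorNumberings hm₂).mp hn₂)

/-- If `f : ℕ → ℂ` is multiplicative, then `g_{f,G}` is multiplicative. -/
theorem stmt1 (v : ℕ) (E : Finset (Sym2 (Fin v))) (hE : ∀ a ∈ E, ¬ a.IsDiag)
    (f : ℕ → ℂ) (hf : ∀ m₁ m₂ : ℕ, Nat.Coprime m₁ m₂ → f (m₁ * m₂) = f m₁ * f m₂) :
    ∀ m₁ m₂ : ℕ, Nat.Coprime m₁ m₂ →
      gfG v E f (m₁ * m₂) = gfG v E f m₁ * gfG v E f m₂ :=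
  stmt1_general v E f hf
end
end

section
/- For any graph G, any prime p, and any k ≥ 0, the value f_G(p^k) = Σ_{N_1⋯N_v = p^k} μ(n_1)⋯μ(n_e) (sum over all edge numberings of G) equals the coefficient of x^k in the polynomial Q_G(x) = Σ_{F ⊆ E} (−1)^{card(F)} x^{v(F)}. -/
open scoped BigOperators Classical

noncomputable section

/-- `v(F)`: the number of vertices incident to at least one edge of `F`. -/
def vCount (v : ℕ) (F : Finset (Sym2 (Fin v))) : ℕ :=
  (Finset.univ.filter fun r : Fin v => ∃ a ∈ F, r ∈ a).card

/-- `f_G(m) = Σ_{N_1 ⋯ N_v = m} μ(n_1) ⋯ μ(n_e)`, the sum extending over all edge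
numberings of the graph whose associated vertex numbering has product `m`. -/
def fG (v : ℕ) (E : Finset (Sym2 (Fin v))) (m : ℕ) : ℤ :=
  ∑ᶠ n : {a : Sym2 (Fin v) // a ∈ E} → ℕ+,
    if ∏ r, vertexNum v E n r = m then ∏ a, ArithmeticFunction.moebius (n a : ℕ) else 0

/-- The polynomial `Q_G(x) = Σ_{F ⊆ E} (−1)^{card F} x^{v(F)}`. -/
def QGpoly (v : ℕ) (E : Finset (Sym2 (Fin v))) : Polynomial ℤ :=
  ∑ F ∈ E.powerset, Polynomial.C ((-1 : ℤ) ^ F.card) * Polynomial.X ^ vCount v F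

/-- lcm of a finite family whose values are all `1` or `p`. -/
lemma lcm_of_mem_pair {α : Type*} (s : Finset α) (f : α → ℕ) (p : ℕ)
    (h : ∀ x ∈ s, f x = 1 ∨ f x = p) :
    s.lcm f = if ∃ x ∈ s, f x = p then p else 1 := by
  split_ifs with hex
  · apply Nat.dvd_antisymm
    · apply Finset.lcm_dvd
      intro x hx; rcases h x hx with h1 | h1 <;> simp [h1]
    · obtain ⟨x, hx, hfx⟩ := hex
      simpa [hfx] using Finset.dvd_lcm (f := f) hx
  · have hd : s.lcm f ∣ 1 := by
      apply Finset.lcm_dvd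
      intro x hx
      rcases h x hx with h1 | h1
      · simp [h1]
      · exact absurd ⟨x, hx, h1⟩ hex
    exact Nat.dvd_one.mp hd

/-- For any prime `p` and `k ≥ 0`, `f_G(p^k)` equals the coefficient
of `x^k` in `Q_G(x)`. -/
theorem stmt2 (v : ℕ) (E : Finset (Sym2 (Fin v))) (hE : ∀ a ∈ E, ¬ a.IsDiag)
    (p : ℕ) (hp : p.Prime) (k : ℕ) :
    fG v E (p ^ k) = (QGpoly v E).coeff k := by
  classical
  set pp : ℕ+ := ⟨p, hp.pos⟩ with hppdef
  have hppco : (pp : ℕ) = p := rfl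
  have hp1 : (1 : ℕ) < p := hp.one_lt
  have hppne : pp ≠ 1 := by
    intro h
    have h2 : (pp : ℕ) = ((1 : ℕ+) : ℕ) := by rw [h]
    rw [hppco, PNat.one_coe] at h2
    omega
  -- the indicator map from subsets of E to edge numberings
  set ι : Finset (Sym2 (Fin v)) → ({a : Sym2 (Fin v) // a ∈ E} → ℕ+) :=
    fun F a => if a.1 ∈ F then pp else 1 with hι
  -- values of ι are 1 or p
  have hιval : ∀ F, ∀ a : {a : Sym2 (Fin v) // a ∈ E},
      ((ι F a : ℕ)) = if a.1 ∈ F then p else 1 := by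
    intro F a
    by_cases h : a.1 ∈ F <;> simp [hι, h, hppco]
  -- ι is injective on the powerset
  have hinj : ∀ F ∈ E.powerset, ∀ F' ∈ E.powerset, ι F = ι F' → F = F' := by
    intro F hF F' hF' hff
    rw [Finset.mem_powerset] at hF hF'
    ext b
    constructor
    · intro hb
      have hbE : b ∈ E := hF hb
      have := congrFun hff ⟨b, hbE⟩
      simp only [hι] at this
      rw [if_pos hb] at this
      by_contra hb'
      rw [if_neg hb'] at this
      exact hppne this
    · intro hb
      have hbE : b ∈ E := hF' hb
      have := congrFun hff ⟨b, hbE⟩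
      simp only [hι] at this
      rw [if_pos hb] at this
      by_contra hb'
      rw [if_neg hb'] at this
      exact hppne this.symm
  -- vertex numbers of ι F
  have hvert : ∀ F ∈ E.powerset, ∀ r : Fin v,
      vertexNum v E (ι F) r = if ∃ a ∈ F, r ∈ a then p else 1 := by
    intro F hF r
    rw [Finset.mem_powerset] at hF
    rw [vertexNum, lcm_of_mem_pair _ _ p (fun a _ => by rw [hιval]; split_ifs <;> simp)]
    have hiff : (∃ a ∈ E.attach.filter (fun b => r ∈ b.1), ((ι F a : ℕ)) = p) ↔
        ∃ a ∈ F, r ∈ a := by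
      constructor
      · rintro ⟨a, ha, hap⟩
        rw [Finset.mem_filter] at ha
        rw [hιval] at hap
        by_cases h : a.1 ∈ F
        · exact ⟨a.1, h, ha.2⟩
        · rw [if_neg h] at hap; omega
      · rintro ⟨b, hbF, hbr⟩
        have hbE : b ∈ E := hF hbF
        refine ⟨⟨b, hbE⟩, Finset.mem_filter.mpr ⟨Finset.mem_attach _ _, hbr⟩, ?_⟩
        rw [hιval, if_pos hbF]
    rw [if_congr hiff rfl rfl]
  -- product of vertex numbers of ι F
  have hprod : ∀ F ∈ E.powerset, ∏ r, vertexNum v E (ι F) r = p ^ vCount v F := by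
    intro F hF
    have := hvert F hF
    calc ∏ r, vertexNum v E (ι F) r
        = ∏ r, (if ∃ a ∈ F, r ∈ a then p else 1) := Finset.prod_congr rfl fun r _ => this r
      _ = p ^ vCount v F := by
          rw [Finset.prod_ite _ _, Finset.prod_const, Finset.prod_const_one, mul_one, vCount]
  -- product of moebius values of ι F
  have hmu : ∀ F ∈ E.powerset,
      ∏ a : {a : Sym2 (Fin v) // a ∈ E}, ArithmeticFunction.moebius ((ι F a : ℕ))
        = (-1 : ℤ) ^ F.card := by
    intro F hF
    rw [Finset.mem_powerset] at hF
    have h1 : ∀ a : {a : Sym2 (Fin v) // a ∈ E},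
        ArithmeticFunction.moebius ((ι F a : ℕ)) = if a.1 ∈ F then (-1 : ℤ) else 1 := by
      intro a
      rw [hιval]
      split_ifs with h
      · exact ArithmeticFunction.moebius_apply_prime hp
      · simp
    calc ∏ a : {a : Sym2 (Fin v) // a ∈ E}, ArithmeticFunction.moebius ((ι F a : ℕ))
        = ∏ a : {a : Sym2 (Fin v) // a ∈ E}, (if a.1 ∈ F then (-1 : ℤ) else 1) :=
          Finset.prod_congr rfl fun a _ => h1 a
      _ = ∏ b ∈ E, (if b ∈ F then (-1 : ℤ) else 1) := by
          rw [Finset.univ_eq_attach, Finset.prod_attach E (fun b => if b ∈ F then (-1 : ℤ) else 1)]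
      _ = (-1 : ℤ) ^ F.card := by
          rw [Finset.prod_ite _ _, Finset.prod_const, Finset.prod_const_one, mul_one,
            Finset.filter_mem_eq_inter, Finset.inter_eq_right.mpr hF]
  -- the summand
  set g : ({a : Sym2 (Fin v) // a ∈ E} → ℕ+) → ℤ :=
    fun n => if ∏ r, vertexNum v E n r = p ^ k
      then ∏ a, ArithmeticFunction.moebius (n a : ℕ) else 0 with hg
  -- support of g is contained in the image of ι
  have hsupp : Function.support g ⊆ ↑(E.powerset.image ι) := by
    intro n hn
    rw [Function.mem_support, hg] at hn
    simp only at hn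
    split_ifs at hn with hcond
    · -- every edge number is 1 or pp
      have hdichot : ∀ a : {a : Sym2 (Fin v) // a ∈ E}, n a = 1 ∨ n a = pp := by
        intro a
        obtain ⟨r, hr⟩ : ∃ r, r ∈ a.1 := ⟨(Quot.out a.1).1, Sym2.out_fst_mem a.1⟩
        have hmem : a ∈ E.attach.filter fun b => r ∈ b.1 :=
          Finset.mem_filter.mpr ⟨Finset.mem_attach _ _, hr⟩
        have h1 : (n a : ℕ) ∣ vertexNum v E n r := Finset.dvd_lcm hmem
        have h2 : vertexNum v E n r ∣ p ^ k := by
          rw [← hcond]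
          exact Finset.dvd_prod_of_mem _ (Finset.mem_univ r)
        obtain ⟨i, hik, hi⟩ := (Nat.dvd_prime_pow hp).mp (h1.trans h2)
        have hsq : Squarefree ((n a : ℕ)) := by
          have hne := Finset.prod_ne_zero_iff.mp hn a (Finset.mem_univ a)
          exact ArithmeticFunction.moebius_ne_zero_iff_squarefree.mp hne
        match i, hi with
        | 0, hi => exact Or.inl (PNat.coe_injective (by simpa using hi))
        | 1, hi => exact Or.inr (PNat.coe_injective (by rw [hi, pow_one, hppco]))
        | (j+2), hi =>
          exfalso
          have hdvd : p * p ∣ (n a : ℕ) := by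
            rw [hi]
            exact Dvd.intro (p ^ j) (by ring)
          have := hsq p hdvd
          rw [Nat.isUnit_iff] at this
          omega
      -- n is the indicator of the subset F of E where n = pp
      set F : Finset (Sym2 (Fin v)) :=
        (Finset.univ.filter (fun a : {a : Sym2 (Fin v) // a ∈ E} => n a = pp)).image
          Subtype.val with hFdef
      have hFE : F ∈ E.powerset := by
        rw [Finset.mem_powerset]
        intro b hb
        obtain ⟨a, _, rfl⟩ := Finset.mem_image.mp hb
        exact a.2
      refine Finset.mem_coe.mpr (Finset.mem_image.mpr ⟨F, hFE, ?_⟩)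
      funext a
      by_cases hna : n a = pp
      · have haF : a.1 ∈ F :=
          Finset.mem_image.mpr ⟨a, Finset.mem_filter.mpr ⟨Finset.mem_univ a, hna⟩, rfl⟩
        simp only [hι, if_pos haF, hna]
      · have haF : a.1 ∉ F := by
          intro h
          obtain ⟨a', ha', hval⟩ := Finset.mem_image.mp h
          rw [Finset.mem_filter] at ha'
          have : a' = a := Subtype.ext hval
          exact hna (this ▸ ha'.2)
        have hna1 : n a = 1 := (hdichot a).resolve_right hna
        simp only [hι, if_neg haF, hna1]
    · exact absurd rfl hn
  -- evaluate the coefficient on the right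
  have hcoeff : (QGpoly v E).coeff k
      = ∑ F ∈ E.powerset, (if vCount v F = k then (-1 : ℤ) ^ F.card else 0) := by
    rw [QGpoly, Polynomial.finset_sum_coeff]
    refine Finset.sum_congr rfl fun F hF => ?_
    rw [Polynomial.coeff_C_mul, Polynomial.coeff_X_pow]
    by_cases h : vCount v F = k
    · rw [if_pos h.symm, if_pos h, mul_one]
    · rw [if_neg (fun hh => h hh.symm), if_neg h, mul_zero]
  -- put everything together
  have hfg : fG v E (p ^ k) = ∑ᶠ n, g n := rfl
  rw [hfg, finsum_eq_finset_sum_of_support_subset g hsupp, Finset.sum_image hinj, hcoeff]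
  refine Finset.sum_congr rfl fun F hF => ?_
  rw [hg]
  simp only
  rw [hprod F hF]
  have hiff : (p ^ vCount v F = p ^ k) ↔ vCount v F = k :=
    (Nat.pow_right_injective hp.two_le).eq_iff
  rw [if_congr hiff rfl rfl]
  split_ifs with h
  · exact hmu F hF
  · rfl
end
end

section
/- For any graph G, Σ_{m=1}^{∞} f_G^+(m)/m = ∏_{p prime} (1 + f_G^+(p^2)/p^2 + ⋯ + f_G^+(p^v)/p^v), and this quantity is finite. -/
open scoped BigOperators Classical

noncomputable section

/-- `f_G^+(m) = Σ_{N_1 ⋯ N_v = m} |μ(n_1) ⋯ μ(n_e)|`, the sum extending over all edge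
numberings of the graph whose associated vertex numbering has product `m`. -/
def fGplus (v : ℕ) (E : Finset (Sym2 (Fin v))) (m : ℕ) : ℤ :=
  ∑ᶠ n : {a : Sym2 (Fin v) // a ∈ E} → ℕ+,
    if ∏ r, vertexNum v E n r = m then |∏ a, ArithmeticFunction.moebius (n a : ℕ)| else 0

/-!
Since `|μ(n_1) ⋯ μ(n_e)|` is `1` or `0` according as all `n_a` are squarefree, `f_G^+(m)` counts
the squarefree edge numberings whose vertex product is `m`. Splitting every `n_a` into its gcds
with coprime `m₁` and `m₂` shows that `f_G^+` is multiplicative. A prime dividing `n_a` divides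
the vertex numbers of both ends of `a`, so `f_G^+(p) = 0`; the edge numbers of a numbering
counted by `f_G^+(p^α)` all divide `p`, so `f_G^+(p^α) ≤ 2^e`, and `f_G^+(p^α) = 0` for
`α > v`. Hence the Euler factors are `1 + O(p⁻²)`, their partial products are bounded, the series
converges, and the Euler product of a multiplicative function applies.
-/

open Finset

theorem summable_of_prod_primesBelow_tsum_le {f : ℕ → ℝ} (hf₀ : f 0 = 0) (hf₁ : f 1 = 1)
    (hmul : ∀ {m n : ℕ}, m.Coprime n → f (m * n) = f m * f n) (hf : ∀ n, 0 ≤ f n)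
    (hsum : ∀ {p : ℕ}, p.Prime → Summable fun e => f (p ^ e)) {C : ℝ}
    (hC : ∀ N : ℕ, ∏ p ∈ N.primesBelow, ∑' e, f (p ^ e) ≤ C) : Summable f := by
  refine summable_of_sum_range_le (c := C) hf fun N => ?_
  have hsmooth := (EulerProduct.summable_and_hasSum_smoothNumbers_prod_primesBelow_tsum hf₁ hmul
    (fun hp => (hsum hp).congr fun e => (Real.norm_of_nonneg (hf _)).symm) N).2
  have hsupp : ∀ i ∈ range N, f i ≠ 0 → i ∈ N.smoothNumbers := fun i hi hfi =>
    Nat.mem_smoothNumbers_of_lt (Nat.pos_of_ne_zero (by rintro rfl; exact hfi hf₀))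
      (mem_range.mp hi)
  calc ∑ i ∈ range N, f i = ∑ i ∈ (range N).subtype (· ∈ N.smoothNumbers), f i := by
        rw [sum_subtype_eq_sum_filter, sum_filter_of_ne hsupp]
    _ ≤ ∏ p ∈ N.primesBelow, ∑' e, f (p ^ e) := sum_le_hasSum _ (fun i _ => hf i) hsmooth
    _ ≤ C := hC N

theorem Finset.lcm_mul_eq_mul_lcm_of_coprime {ι : Type*} {s : Finset ι} {f g : ι → ℕ}
    {m₁ m₂ : ℕ} (hm : m₁.Coprime m₂) (hf : ∀ i ∈ s, f i ∣ m₁)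
    (hg : ∀ i ∈ s, g i ∣ m₂) :
    s.lcm (fun i => f i * g i) = s.lcm f * s.lcm g := by
  refine Nat.dvd_antisymm (lcm_dvd fun i hi => mul_dvd_mul (dvd_lcm hi) (dvd_lcm hi)) ?_
  have hcop : (s.lcm f).Coprime (s.lcm g) :=
    (hm.coprime_dvd_left (lcm_dvd hf)).coprime_dvd_right (lcm_dvd hg)
  exact hcop.mul_dvd_of_dvd_of_dvd
    (lcm_dvd fun i hi => (dvd_mul_right _ _).trans (dvd_lcm (f := fun i => f i * g i) hi))
    (lcm_dvd fun i hi => (dvd_mul_left _ _).trans (dvd_lcm (f := fun i => f i * g i) hi))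

theorem Nat.eq_of_mul_eq_mul_of_coprime {x₁ x₂ m₁ m₂ : ℕ} (h : x₁ * x₂ = m₁ * m₂)
    (h₁ : x₁.Coprime m₂) (h₂ : x₂.Coprime m₁) : x₁ = m₁ :=
  Nat.dvd_antisymm (h₁.dvd_of_dvd_mul_right (h ▸ dvd_mul_right _ _))
    (h₂.symm.dvd_of_dvd_mul_right (h.symm ▸ dvd_mul_right _ _))

namespace GraphNumbering

abbrev EdgeNumbering (v : ℕ) (E : Finset (Sym2 (Fin v))) := {a : Sym2 (Fin v) // a ∈ E} → ℕ+

variable {v : ℕ} {E : Finset (Sym2 (Fin v))}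

lemma coe_dvd_vertexNum (n : EdgeNumbering v E) {a : {a // a ∈ E}} {r : Fin v} (hr : r ∈ a.1) :
    (n a : ℕ) ∣ vertexNum v E n r :=
  dvd_lcm (by simp [hr])

lemma vertexNum_dvd {n : EdgeNumbering v E} {m : ℕ} (h : ∀ a, (n a : ℕ) ∣ m) (r : Fin v) :
    vertexNum v E n r ∣ m :=
  lcm_dvd fun a _ => h a

lemma prod_vertexNum_pos (n : EdgeNumbering v E) : 0 < ∏ r, vertexNum v E n r :=
  prod_pos fun r _ => Nat.pos_of_ne_zero fun h => by
    obtain ⟨a, -, ha⟩ := lcm_eq_zero_iff.mp h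
    exact (n a).ne_zero ha

lemma coe_dvd_prod_vertexNum (n : EdgeNumbering v E) (a : {a // a ∈ E}) :
    (n a : ℕ) ∣ ∏ r, vertexNum v E n r :=
  (coe_dvd_vertexNum n a.1.out_fst_mem).trans (dvd_prod_of_mem _ (mem_univ _))

lemma vertexNum_mul {m₁ m₂ : ℕ} (hm : m₁.Coprime m₂) {n₁ n₂ : EdgeNumbering v E}
    (h₁ : ∀ a, (n₁ a : ℕ) ∣ m₁) (h₂ : ∀ a, (n₂ a : ℕ) ∣ m₂) (r : Fin v) :
    vertexNum v E (n₁ * n₂) r = vertexNum v E n₁ r * vertexNum v E n₂ r :=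
  lcm_mul_eq_mul_lcm_of_coprime hm (fun a _ => h₁ a) (fun a _ => h₂ a)

lemma sq_dvd_prod_vertexNum (hE : ∀ a ∈ E, ¬ a.IsDiag) (n : EdgeNumbering v E) {q : ℕ}
    (hq : q.Prime) (h : q ∣ ∏ r, vertexNum v E n r) : q ^ 2 ∣ ∏ r, vertexNum v E n r := by
  obtain ⟨r, -, hr⟩ := (Prime.dvd_finsetProd_iff hq.prime _).mp h
  obtain ⟨a, ha, hqa⟩ := (Prime.dvd_finsetProd_iff hq.prime _).mp (hr.trans (lcm_dvd_prod _ _))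
  have hra : r ∈ a.1 := (mem_filter.mp ha).2
  obtain ⟨s, hs⟩ : ∃ s, s(r, s) = a.1 := ⟨_, Sym2.other_spec hra⟩
  have hrs : r ≠ s := fun h => hE a.1 a.2 (by rw [← hs, h, Sym2.mk_isDiag_iff])
  have hsa : s ∈ a.1 := hs ▸ Sym2.mem_mk_right r s
  calc q ^ 2 ∣ vertexNum v E n r * vertexNum v E n s :=
        sq q ▸ mul_dvd_mul hr (hqa.trans (coe_dvd_vertexNum n hsa))
    _ = ∏ r ∈ {r, s}, vertexNum v E n r := (prod_pair hrs).symm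
    _ ∣ ∏ r, vertexNum v E n r := prod_dvd_prod_of_subset _ _ _ (subset_univ _)

def squarefreeDivisors (m : ℕ) : Finset ℕ+ :=
  {d ∈ m.divisors | Squarefree d}.preimage ((↑) : ℕ+ → ℕ) PNat.coe_injective.injOn

lemma mem_squarefreeDivisors {m : ℕ} {k : ℕ+} :
    k ∈ squarefreeDivisors m ↔ Squarefree (k : ℕ) ∧ (k : ℕ) ∣ m ∧ m ≠ 0 := by
  simp [squarefreeDivisors, and_comm]

variable (v E) in
def squarefreeNumberings (m : ℕ) : Finset (EdgeNumbering v E) :=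
  {n ∈ Fintype.piFinset fun _ => squarefreeDivisors m | ∏ r, vertexNum v E n r = m}

lemma mem_squarefreeNumberings {m : ℕ} {n : EdgeNumbering v E} :
    n ∈ squarefreeNumberings v E m ↔
      (∀ a, Squarefree (n a : ℕ)) ∧ ∏ r, vertexNum v E n r = m := by
  simp only [squarefreeNumberings, mem_filter, Fintype.mem_piFinset, mem_squarefreeDivisors]
  constructor
  · exact fun ⟨h, hm⟩ => ⟨fun a => (h a).1, hm⟩
  · rintro ⟨h, rfl⟩
    exact ⟨fun a => ⟨h a, coe_dvd_prod_vertexNum n a, (prod_vertexNum_pos n).ne'⟩, rfl⟩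

theorem fGplus_eq_card (m : ℕ) : fGplus v E m = #(squarefreeNumberings v E m) := by
  have hterm : ∀ n : EdgeNumbering v E,
      (if ∏ r, vertexNum v E n r = m then |∏ a, ArithmeticFunction.moebius (n a : ℕ)|
        else 0) =
        if n ∈ squarefreeNumberings v E m then 1 else 0 := fun n => by
    simp only [mem_squarefreeNumberings, abs_prod, ArithmeticFunction.abs_moebius, prod_boole,
      mem_univ, true_implies]
    split_ifs <;> tauto
  rw [fGplus, finsum_congr hterm, finsum_eq_sum_of_support_subset (s := squarefreeNumberings v E m)
    _ (fun n hn => by simpa using hn), sum_boole, filter_mem_eq_inter, inter_self]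

def gcdPNat (k : ℕ+) (m : ℕ) : ℕ+ := ⟨Nat.gcd k m, Nat.gcd_pos_of_pos_left m k.pos⟩

lemma gcdPNat_mul_gcdPNat {k : ℕ+} {m₁ m₂ : ℕ} (hm : m₁.Coprime m₂)
    (hk : (k : ℕ) ∣ m₁ * m₂) :
    gcdPNat k m₁ * gcdPNat k m₂ = k :=
  PNat.coe_injective <| (hm.gcd_mul k).symm.trans (Nat.gcd_eq_left hk)

lemma gcdPNat_mul_left {k₁ k₂ : ℕ+} {m₁ m₂ : ℕ} (hm : m₁.Coprime m₂)
    (h₁ : (k₁ : ℕ) ∣ m₁) (h₂ : (k₂ : ℕ) ∣ m₂) : gcdPNat (k₁ * k₂) m₁ = k₁ :=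
  PNat.coe_injective <| ((hm.symm.coprime_dvd_left h₂).gcd_mul_right_cancel _).trans
    (Nat.gcd_eq_left h₁)

lemma mul_mem_squarefreeNumberings_mul {m₁ m₂ : ℕ} (hm : m₁.Coprime m₂)
    {n₁ n₂ : EdgeNumbering v E} (h₁ : n₁ ∈ squarefreeNumberings v E m₁)
    (h₂ : n₂ ∈ squarefreeNumberings v E m₂) :
    n₁ * n₂ ∈ squarefreeNumberings v E (m₁ * m₂) := by
  rw [mem_squarefreeNumberings] at *
  have hd₁ a : (n₁ a : ℕ) ∣ m₁ := h₁.2 ▸ coe_dvd_prod_vertexNum n₁ a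
  have hd₂ a : (n₂ a : ℕ) ∣ m₂ := h₂.2 ▸ coe_dvd_prod_vertexNum n₂ a
  refine ⟨fun a => ?_, ?_⟩
  · rw [Pi.mul_apply, PNat.mul_coe,
      Nat.squarefree_mul ((hm.coprime_dvd_left (hd₁ a)).coprime_dvd_right (hd₂ a))]
    exact ⟨h₁.1 a, h₂.1 a⟩
  · simp only [vertexNum_mul hm hd₁ hd₂, prod_mul_distrib, h₁.2, h₂.2]

lemma gcdPNat_mem_squarefreeNumberings {m₁ m₂ : ℕ} (hm : m₁.Coprime m₂)
    {n : EdgeNumbering v E} (hn : n ∈ squarefreeNumberings v E (m₁ * m₂)) :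
    (fun a => gcdPNat (n a) m₁) ∈ squarefreeNumberings v E m₁ := by
  rw [mem_squarefreeNumberings] at *
  set n₁ : EdgeNumbering v E := fun a => gcdPNat (n a) m₁
  set n₂ : EdgeNumbering v E := fun a => gcdPNat (n a) m₂
  have hd₁ a : (n₁ a : ℕ) ∣ m₁ := Nat.gcd_dvd_right _ _
  have hd₂ a : (n₂ a : ℕ) ∣ m₂ := Nat.gcd_dvd_right _ _
  have hsplit : n₁ * n₂ = n :=
    funext fun a => gcdPNat_mul_gcdPNat hm (hn.2 ▸ coe_dvd_prod_vertexNum n a)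
  have hprod : (∏ r, vertexNum v E n₁ r) * ∏ r, vertexNum v E n₂ r = m₁ * m₂ := by
    rw [← prod_mul_distrib, ← hn.2, ← hsplit]
    simp only [vertexNum_mul hm hd₁ hd₂]
  refine ⟨fun a => (hn.1 a).squarefree_of_dvd (Nat.gcd_dvd_left _ _),
    Nat.eq_of_mul_eq_mul_of_coprime hprod ?_ ?_⟩
  · exact Nat.Coprime.prod_left fun r _ => hm.coprime_dvd_left (vertexNum_dvd hd₁ r)
  · exact Nat.Coprime.prod_left fun r _ => hm.symm.coprime_dvd_left (vertexNum_dvd hd₂ r)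

theorem card_squarefreeNumberings_mul {m₁ m₂ : ℕ} (hm : m₁.Coprime m₂) :
    #(squarefreeNumberings v E (m₁ * m₂)) =
      #(squarefreeNumberings v E m₁) * #(squarefreeNumberings v E m₂) := by
  rw [← card_product]
  refine card_nbij' (fun n => (fun a => gcdPNat (n a) m₁, fun a => gcdPNat (n a) m₂))
    (fun n => n.1 * n.2) (fun n hn => ?_) (fun n hn => ?_) (fun n hn => ?_) (fun n hn => ?_)
  · exact mem_product.mpr ⟨gcdPNat_mem_squarefreeNumberings hm hn,
      gcdPNat_mem_squarefreeNumberings hm.symm (mul_comm m₁ m₂ ▸ hn)⟩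
  · exact mul_mem_squarefreeNumberings_mul hm (mem_product.mp hn).1 (mem_product.mp hn).2
  · exact funext fun a =>
      gcdPNat_mul_gcdPNat hm ((mem_squarefreeNumberings.mp hn).2 ▸ coe_dvd_prod_vertexNum n a)
  · obtain ⟨h₁, h₂⟩ := mem_product.mp hn
    have hd₁ a : (n.1 a : ℕ) ∣ m₁ :=
      (mem_squarefreeNumberings.mp h₁).2 ▸ coe_dvd_prod_vertexNum _ a
    have hd₂ a : (n.2 a : ℕ) ∣ m₂ :=
      (mem_squarefreeNumberings.mp h₂).2 ▸ coe_dvd_prod_vertexNum _ a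
    refine Prod.ext (funext fun a => gcdPNat_mul_left hm (hd₁ a) (hd₂ a))
      (funext fun a => (congrArg (gcdPNat · m₂) (mul_comm (n.1 a) (n.2 a))).trans
        (gcdPNat_mul_left hm.symm (hd₂ a) (hd₁ a)))

theorem fGplus_mul {m₁ m₂ : ℕ} (hm : m₁.Coprime m₂) :
    fGplus v E (m₁ * m₂) = fGplus v E m₁ * fGplus v E m₂ := by
  simp only [fGplus_eq_card, card_squarefreeNumberings_mul hm, Nat.cast_mul]

lemma fGplus_one : fGplus v E 1 = 1 := by
  have hone : ∀ n : EdgeNumbering v E, n ∈ squarefreeNumberings v E 1 ↔ n = 1 := fun n => by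
    refine ⟨fun hn => funext fun a => PNat.coe_injective ?_, ?_⟩
    · exact Nat.dvd_one.mp ((mem_squarefreeNumberings.mp hn).2 ▸ coe_dvd_prod_vertexNum n a)
    · rintro rfl
      refine mem_squarefreeNumberings.mpr ⟨fun _ => squarefree_one, prod_eq_one fun r _ => ?_⟩
      exact Nat.dvd_one.mp (vertexNum_dvd (fun _ => dvd_rfl) r)
  rw [fGplus_eq_card, card_eq_one.mpr ⟨1, eq_singleton_iff_unique_mem.mpr
    ⟨(hone 1).mpr rfl, fun n hn => (hone n).mp hn⟩⟩, Nat.cast_one]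

theorem fGplus_prime (hE : ∀ a ∈ E, ¬ a.IsDiag) {p : ℕ} (hp : p.Prime) :
    fGplus v E p = 0 := by
  rw [fGplus_eq_card, Nat.cast_eq_zero, card_eq_zero, eq_empty_iff_forall_notMem]
  intro n hn
  have hprod := (mem_squarefreeNumberings.mp hn).2
  have h := sq_dvd_prod_vertexNum hE n hp (hprod ▸ dvd_rfl)
  rw [hprod] at h
  have := (Nat.pow_dvd_pow_iff_le_right hp.one_lt).mp (by simpa using h : p ^ 2 ∣ p ^ 1)
  omega

lemma coe_dvd_of_mem_squarefreeNumberings_pow {p α : ℕ}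
    {n : EdgeNumbering v E} (hn : n ∈ squarefreeNumberings v E (p ^ α)) (a : {a // a ∈ E}) :
    (n a : ℕ) ∣ p := by
  obtain ⟨hsq, hprod⟩ := mem_squarefreeNumberings.mp hn
  have hdvd : (n a : ℕ) ∣ p ^ α := hprod ▸ coe_dvd_prod_vertexNum n a
  rcases eq_or_ne α 0 with rfl | hα
  · exact (Nat.dvd_one.mp hdvd ▸ one_dvd p)
  · exact ((hsq a).dvd_pow_iff_dvd hα).mp hdvd

theorem fGplus_prime_pow_eq_zero {p α : ℕ} (hp : p.Prime) (hα : v < α) :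
    fGplus v E (p ^ α) = 0 := by
  rw [fGplus_eq_card, Nat.cast_eq_zero, card_eq_zero, eq_empty_iff_forall_notMem]
  intro n hn
  have h : ∏ r, vertexNum v E n r ∣ ∏ _r : Fin v, p :=
    prod_dvd_prod_of_dvd _ _ fun r _ =>
      vertexNum_dvd (coe_dvd_of_mem_squarefreeNumberings_pow hn) r
  rw [(mem_squarefreeNumberings.mp hn).2, prod_const, card_univ, Fintype.card_fin,
    Nat.pow_dvd_pow_iff_le_right hp.one_lt] at h
  omega

theorem fGplus_prime_pow_le {p : ℕ} (hp : p.Prime) (α : ℕ) :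
    fGplus v E (p ^ α) ≤ 2 ^ #E := by
  have hsub :
      squarefreeNumberings v E (p ^ α) ⊆ Fintype.piFinset fun _ => {1, ⟨p, hp.pos⟩} :=
    fun n hn => Fintype.mem_piFinset.mpr fun a => by
      rcases (Nat.dvd_prime hp).mp (coe_dvd_of_mem_squarefreeNumberings_pow hn a) with h | h
      · exact mem_insert.mpr (Or.inl (PNat.coe_injective h))
      · exact mem_insert_of_mem (mem_singleton.mpr (PNat.coe_injective h))
  have hcard : #(squarefreeNumberings v E (p ^ α)) ≤ 2 ^ #E :=
    calc #(squarefreeNumberings v E (p ^ α))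
        ≤ ∏ _a : {a // a ∈ E}, #({1, ⟨p, hp.pos⟩} : Finset ℕ+) :=
          (card_le_card hsub).trans (Fintype.card_piFinset _).le
      _ ≤ 2 ^ #E := by
          rw [prod_const, card_univ, Fintype.card_coe]
          exact Nat.pow_le_pow_left card_le_two _
  rw [fGplus_eq_card]
  exact_mod_cast hcard

variable (v E) in
def fGplusDiv (m : ℕ) : ℝ := (fGplus v E m : ℝ) / m

lemma fGplusDiv_zero : fGplusDiv v E 0 = 0 := by simp [fGplusDiv]

lemma fGplusDiv_one : fGplusDiv v E 1 = 1 := by simp [fGplusDiv, fGplus_one]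

lemma fGplusDiv_nonneg (m : ℕ) : 0 ≤ fGplusDiv v E m := by
  unfold fGplusDiv
  rw [fGplus_eq_card]
  positivity

lemma fGplusDiv_mul {m₁ m₂ : ℕ} (hm : m₁.Coprime m₂) :
    fGplusDiv v E (m₁ * m₂) = fGplusDiv v E m₁ * fGplusDiv v E m₂ := by
  simp only [fGplusDiv, fGplus_mul hm, Int.cast_mul, Nat.cast_mul, mul_div_mul_comm]

lemma tsum_fGplusDiv_prime_pow (hE : ∀ a ∈ E, ¬ a.IsDiag) {p : ℕ} (hp : p.Prime) :
    ∑' e, fGplusDiv v E (p ^ e) = 1 + ∑ α ∈ Icc 2 v, fGplusDiv v E (p ^ α) := by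
  have hvanish : ∀ e ∉ insert 0 (insert 1 (Icc 2 v)), fGplusDiv v E (p ^ e) = 0 := by
    intro e he
    simp only [mem_insert, mem_Icc, not_or, not_and, not_le] at he
    simp [fGplusDiv, fGplus_prime_pow_eq_zero hp (by omega : v < e)]
  rw [tsum_eq_sum hvanish, sum_insert (by simp), sum_insert (by simp)]
  simp [fGplusDiv, fGplus_one, fGplus_prime hE hp]

lemma sum_fGplusDiv_prime_pow_le {p : ℕ} (hp : p.Prime) :
    ∑ α ∈ Icc 2 v, fGplusDiv v E (p ^ α) ≤ v * 2 ^ #E * ((p : ℝ) ^ 2)⁻¹ := by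
  have hterm : ∀ α ∈ Icc 2 v, fGplusDiv v E (p ^ α) ≤ 2 ^ #E * ((p : ℝ) ^ 2)⁻¹ := by
    intro α hα
    have hf : (fGplus v E (p ^ α) : ℝ) ≤ 2 ^ #E := by exact_mod_cast fGplus_prime_pow_le hp α
    have hpow : (p : ℝ) ^ 2 ≤ (p : ℝ) ^ α :=
      pow_le_pow_right₀ (by exact_mod_cast hp.one_le) (mem_Icc.mp hα).1
    rw [fGplusDiv, Nat.cast_pow, div_eq_mul_inv]
    have := hp.pos
    gcongr
  calc ∑ α ∈ Icc 2 v, fGplusDiv v E (p ^ α)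
      ≤ #(Icc 2 v) • (2 ^ #E * ((p : ℝ) ^ 2)⁻¹) := sum_le_card_nsmul _ _ _ hterm
    _ ≤ v * 2 ^ #E * ((p : ℝ) ^ 2)⁻¹ := by
        rw [nsmul_eq_mul, mul_assoc]
        gcongr
        exact_mod_cast (by simp : #(Icc 2 v) ≤ v)

theorem summable_fGplusDiv (hE : ∀ a ∈ E, ¬ a.IsDiag) : Summable (fGplusDiv v E) := by
  set c : ℝ := v * 2 ^ #E
  have hk : Summable fun k : ℕ => c * ((k : ℝ) ^ 2)⁻¹ :=
    (Real.summable_nat_pow_inv.mpr one_lt_two).mul_left c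
  refine summable_of_prod_primesBelow_tsum_le fGplusDiv_zero fGplusDiv_one fGplusDiv_mul
    fGplusDiv_nonneg (fun hp => summable_of_ne_finset_zero (s := range (v + 1))
      fun e he => by simp [fGplusDiv, fGplus_prime_pow_eq_zero hp (by simpa using he)])
    (C := Real.exp (∑' k : ℕ, c * ((k : ℝ) ^ 2)⁻¹)) fun N => ?_
  calc ∏ p ∈ N.primesBelow, ∑' e, fGplusDiv v E (p ^ e)
      ≤ ∏ p ∈ N.primesBelow, (1 + c * ((p : ℝ) ^ 2)⁻¹) := by
        refine prod_le_prod (fun p _ => tsum_nonneg fun e => fGplusDiv_nonneg _) fun p hp => ?_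
        have hprime := Nat.prime_of_mem_primesBelow hp
        rw [tsum_fGplusDiv_prime_pow hE hprime]
        gcongr
        exact sum_fGplusDiv_prime_pow_le hprime
    _ ≤ Real.exp (∑ p ∈ N.primesBelow, c * ((p : ℝ) ^ 2)⁻¹) :=
        Real.prod_one_add_le_exp_sum _ fun p => by positivity
    _ ≤ Real.exp (∑' k : ℕ, c * ((k : ℝ) ^ 2)⁻¹) :=
        Real.exp_le_exp.mpr (hk.sum_le_tsum _ fun k _ => by positivity)

end GraphNumbering

open GraphNumbering in
/-- `Σ_{m=1}^{∞} f_G^+(m)/m = ∏_{p prime} (1 + f_G^+(p²)/p² + ⋯ + f_G^+(p^v)/p^v)`,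
and this quantity is finite (the series converges and the product converges). -/
theorem stmt10 (v : ℕ) (E : Finset (Sym2 (Fin v))) (hE : ∀ a ∈ E, ¬ a.IsDiag) :
    (Summable fun m : ℕ+ => (fGplus v E (m : ℕ) : ℝ) / (m : ℕ)) ∧
    (Multipliable fun p : Nat.Primes =>
      1 + ∑ α ∈ Finset.Icc 2 v, (fGplus v E ((p : ℕ) ^ α) : ℝ) / ((p : ℕ) ^ α : ℕ)) ∧
    (∑' m : ℕ+, (fGplus v E (m : ℕ) : ℝ) / (m : ℕ)) =
      ∏' p : Nat.Primes,
        (1 + ∑ α ∈ Finset.Icc 2 v, (fGplus v E ((p : ℕ) ^ α) : ℝ) / ((p : ℕ) ^ α : ℕ)) := by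
  have hsum := summable_fGplusDiv hE
  have hfactor : (fun p : Nat.Primes => 1 + ∑ α ∈ Icc 2 v, fGplusDiv v E (p ^ α)) =
      fun p : Nat.Primes => ∑' e, fGplusDiv v E (p ^ e) :=
    funext fun p => (tsum_fGplusDiv_prime_pow hE p.2).symm
  have heuler : HasProd (fun p : Nat.Primes => 1 + ∑ α ∈ Icc 2 v, fGplusDiv v E (p ^ α))
      (∑' n, fGplusDiv v E n) := by
    rw [hfactor]
    exact EulerProduct.eulerProduct_hasProd fGplusDiv_one fGplusDiv_mul hsum.abs fGplusDiv_zero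
  exact ⟨summable_pnat_iff_summable_nat.mpr hsum, heuler.multipliable,
    (tsum_pnat_eq_tsum_of_eq_zero fGplusDiv_zero).trans heuler.tprod_eq.symm⟩
end
end

section
/- For any graph G and any vertex k ∈ {1,…,v}, the function C_{G,k}(m) = Σ |μ(n_1)⋯μ(n_e)|, where the sum extends over all edge numberings (n_a) of G with ∏_{1 ≤ r ≤ v, r ≠ k} N_r = m, is multiplicative, and for every prime p, C_{G,k}(p) = h_k, the degree of the vertex k in G. -/
open scoped BigOperators Classical

noncomputable section

/-- `C_{G,k}(m) = Σ |μ(n_1) ⋯ μ(n_e)|`, the sum extending over all edge numberings `(n_a)`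
of the graph with `∏_{1 ≤ r ≤ v, r ≠ k} N_r = m`. -/
def CGk (v : ℕ) (E : Finset (Sym2 (Fin v))) (k : Fin v) (m : ℕ) : ℝ :=
  ∑ᶠ n : {a : Sym2 (Fin v) // a ∈ E} → ℕ+,
    if ∏ r ∈ Finset.univ.erase k, vertexNum v E n r = m then
      |∏ a, (ArithmeticFunction.moebius (n a : ℕ) : ℝ)|
    else 0

/-! Every edge has an endpoint other than `k`, so a numbering counted by `C_{G,k}(m)` takes
values dividing `m`. For coprime `m₁, m₂` such numberings factor uniquely as `n = n₁ n₂` with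
values of `n₁` dividing `m₁` and those of `n₂` dividing `m₂` (take `gcd`s with `m₁` and `m₂`);
the lcm's `N_r`, their product and the Möbius weights all split along this factorization.
For a prime `p` the numbering takes values in `{1, p}`, so `∏_{r ≠ k} N_r = p ^ t` where `t`
counts the vertices `r ≠ k` on an edge numbered `p`. Then `t = 1` exactly when a single edge
is numbered `p` and that edge contains `k`, and each such numbering has weight `|μ p| = 1`. -/

open Finset ArithmeticFunction
open scoped ArithmeticFunction.Moebius

theorem Nat.Coprime.mul_eq_mul_iff_s12 {a b m₁ m₂ : ℕ} (ha : a.Coprime m₂) (hb : b.Coprime m₁) :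
    a * b = m₁ * m₂ ↔ a = m₁ ∧ b = m₂ := by
  refine ⟨fun h => ⟨Nat.dvd_antisymm ?_ ?_, Nat.dvd_antisymm ?_ ?_⟩, fun ⟨h₁, h₂⟩ => h₁ ▸ h₂ ▸ rfl⟩
  · exact ha.dvd_of_dvd_mul_right (Dvd.intro b h)
  · exact hb.symm.dvd_of_dvd_mul_right (Dvd.intro m₂ h.symm)
  · exact hb.dvd_of_dvd_mul_left (Dvd.intro_left a h)
  · exact ha.symm.dvd_of_dvd_mul_left (Dvd.intro_left m₁ h.symm)

theorem Finset.lcm_mul_of_coprime {α : Type*} {s : Finset α} {f g : α → ℕ} {m₁ m₂ : ℕ}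
    (h : m₁.Coprime m₂) (hf : ∀ a ∈ s, f a ∣ m₁) (hg : ∀ a ∈ s, g a ∣ m₂) :
    s.lcm (fun a => f a * g a) = s.lcm f * s.lcm g := by
  have hco : (s.lcm f).Coprime (s.lcm g) :=
    (h.coprime_dvd_left (Finset.lcm_dvd hf)).coprime_dvd_right (Finset.lcm_dvd hg)
  apply Nat.dvd_antisymm
  · exact Finset.lcm_dvd fun a ha => mul_dvd_mul (Finset.dvd_lcm ha) (Finset.dvd_lcm ha)
  · exact hco.mul_dvd_of_dvd_of_dvd
      (Finset.lcm_dvd fun a ha => (dvd_mul_right _ _).trans (Finset.dvd_lcm ha))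
      (Finset.lcm_dvd fun a ha => (dvd_mul_left _ _).trans (Finset.dvd_lcm ha))

theorem Sym2.eq_mk_of_forall_mem {α : Type*} {z : Sym2 α} {x y : α} (hz : ¬ z.IsDiag)
    (h : ∀ r ∈ z, r = x ∨ r = y) : z = s(x, y) := by
  induction z using Sym2.ind with
  | _ a b =>
    have hab : a ≠ b := fun hab => hz (by simp [hab])
    rcases h a (Sym2.mem_mk_left a b) with rfl | rfl <;>
      rcases h b (Sym2.mem_mk_right _ b) with rfl | rfl <;> simp_all [Sym2.eq_swap]

theorem Sym2.exists_mem_ne_of_not_isDiag {α : Type*} {z : Sym2 α} (hz : ¬ z.IsDiag) (x : α) :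
    ∃ r ∈ z, r ≠ x := by
  induction z using Sym2.ind with
  | _ a b =>
    by_cases hax : a = x
    · exact ⟨b, Sym2.mem_mk_right a b, fun hbx => hz (by simp [hax, hbx])⟩
    · exact ⟨a, Sym2.mem_mk_left a b, hax⟩

theorem Pi.mulSingle_left_injective {ι M : Type*} [DecidableEq ι] [One M] {x : M} (hx : x ≠ 1) :
    Function.Injective fun i : ι => (Pi.mulSingle i x : ι → M) := fun i j h => by
  by_contra hne
  have hi := congrFun h i
  dsimp only at hi
  rw [Pi.mulSingle_eq_same, Pi.mulSingle_eq_of_ne hne] at hi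
  exact hx hi

section PiDivisors

variable {ι : Type*} [Fintype ι] [DecidableEq ι]

def piDivisors (ι : Type*) [Fintype ι] [DecidableEq ι] (m : ℕ) : Finset (ι → ℕ+) :=
  Fintype.piFinset fun _ => m.divisors.preimage (↑) PNat.coe_injective.injOn

theorem mem_piDivisors {m : ℕ} (hm : m ≠ 0) {n : ι → ℕ+} :
    n ∈ piDivisors ι m ↔ ∀ a, (n a : ℕ) ∣ m := by
  simp only [piDivisors, Fintype.mem_piFinset, Finset.mem_preimage, Nat.mem_divisors, ne_eq, hm,
    not_false_eq_true, and_true]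

theorem sum_piDivisors_mul {M : Type*} [AddCommMonoid M] {m₁ m₂ : ℕ} (h : m₁.Coprime m₂)
    (hm₁ : m₁ ≠ 0) (hm₂ : m₂ ≠ 0) (f : (ι → ℕ+) → M) :
    ∑ n ∈ piDivisors ι (m₁ * m₂), f n =
      ∑ q ∈ piDivisors ι m₁ ×ˢ piDivisors ι m₂, f (q.1 * q.2) := by
  have hm : m₁ * m₂ ≠ 0 := mul_ne_zero hm₁ hm₂
  symm
  refine Finset.sum_nbij' (fun q => q.1 * q.2)
    (fun n => (fun a => ((n a : ℕ).gcd m₁).toPNat (Nat.gcd_pos_of_pos_left _ (n a).pos),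
      fun a => ((n a : ℕ).gcd m₂).toPNat (Nat.gcd_pos_of_pos_left _ (n a).pos)))
    ?_ ?_ ?_ ?_ fun _ _ => rfl
  all_goals simp only [Finset.mem_product, mem_piDivisors hm, mem_piDivisors hm₁,
    mem_piDivisors hm₂, Pi.mul_apply, PNat.mul_coe]
  · exact fun q ⟨h₁, h₂⟩ a => mul_dvd_mul (h₁ a) (h₂ a)
  · exact fun n _ => ⟨fun a => Nat.gcd_dvd_right _ _, fun a => Nat.gcd_dvd_right _ _⟩
  · rintro ⟨n₁, n₂⟩ ⟨h₁, h₂⟩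
    refine Prod.ext (funext fun a => PNat.coe_injective ?_) (funext fun a => PNat.coe_injective ?_)
    · show Nat.gcd ((n₁ a : ℕ) * n₂ a) m₁ = n₁ a
      rw [Nat.Coprime.gcd_mul_right_cancel _ (Nat.Coprime.coprime_dvd_left (h₂ a) h.symm)]
      exact Nat.gcd_eq_left (h₁ a)
    · show Nat.gcd ((n₁ a : ℕ) * n₂ a) m₂ = n₂ a
      rw [Nat.Coprime.gcd_mul_left_cancel _ (Nat.Coprime.coprime_dvd_left (h₁ a) h)]
      exact Nat.gcd_eq_left (h₂ a)
  · intro n hn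
    funext a
    exact PNat.coe_injective <| (Nat.Coprime.gcd_mul _ h).symm.trans (Nat.gcd_eq_left (hn a))

end PiDivisors

theorem abs_prod_moebius_mul {ι : Type*} [Fintype ι] {n₁ n₂ : ι → ℕ+}
    (h : ∀ a, (n₁ a : ℕ).Coprime (n₂ a)) :
    |∏ a, (μ ((n₁ * n₂) a : ℕ) : ℝ)| =
      |∏ a, (μ (n₁ a : ℕ) : ℝ)| *
        |∏ a, (μ (n₂ a : ℕ) : ℝ)| := by
  rw [← abs_mul, ← Finset.prod_mul_distrib]
  congr 2 with a
  rw [Pi.mul_apply, PNat.mul_coe,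
    isMultiplicative_moebius.map_mul_of_coprime (h a), Int.cast_mul]

theorem abs_prod_moebius_mulSingle {ι : Type*} [Fintype ι] [DecidableEq ι] (b : ι) (x : ℕ+) :
    |∏ a, (μ ((Pi.mulSingle b x : ι → ℕ+) a : ℕ) : ℝ)| =
      |(μ x : ℝ)| := by
  rw [Finset.prod_eq_single b (fun a _ hab => by simp [Pi.mulSingle_eq_of_ne hab])
    (fun hb => absurd (Finset.mem_univ b) hb), Pi.mulSingle_eq_same]

section Graph

variable {v : ℕ} {E : Finset (Sym2 (Fin v))} {k : Fin v}

def vertexNumProd (v : ℕ) (E : Finset (Sym2 (Fin v))) (k : Fin v) (n : E → ℕ+) : ℕ :=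
  ∏ r ∈ univ.erase k, vertexNum v E n r

theorem vertexNumProd_ne_zero (n : E → ℕ+) : vertexNumProd v E k n ≠ 0 :=
  Finset.prod_ne_zero_iff.2 fun r _ => by
    rw [vertexNum, Ne, Finset.lcm_eq_zero_iff]
    rintro ⟨a, -, ha⟩
    exact (n a).ne_zero ha

theorem dvd_vertexNumProd (hE : ∀ a ∈ E, ¬ a.IsDiag) (n : E → ℕ+) (a : E) :
    (n a : ℕ) ∣ vertexNumProd v E k n := by
  obtain ⟨r, hra, hrk⟩ := Sym2.exists_mem_ne_of_not_isDiag (hE a a.2) k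
  have hdvd : (n a : ℕ) ∣ vertexNum v E n r := Finset.dvd_lcm (mem_filter.2 ⟨mem_attach _ _, hra⟩)
  exact hdvd.trans (Finset.dvd_prod_of_mem (vertexNum v E n) (mem_erase.2 ⟨hrk, mem_univ r⟩))

theorem vertexNumProd_mul {m₁ m₂ : ℕ} (h : m₁.Coprime m₂) {n₁ n₂ : E → ℕ+}
    (h₁ : ∀ a, (n₁ a : ℕ) ∣ m₁) (h₂ : ∀ a, (n₂ a : ℕ) ∣ m₂) :
    vertexNumProd v E k (n₁ * n₂) = vertexNumProd v E k n₁ * vertexNumProd v E k n₂ := by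
  rw [vertexNumProd, vertexNumProd, vertexNumProd, ← Finset.prod_mul_distrib]
  exact Finset.prod_congr rfl fun r _ =>
    Finset.lcm_mul_of_coprime h (fun a _ => h₁ a) (fun a _ => h₂ a)

theorem coprime_vertexNumProd {m₁ m₂ : ℕ} {n : E → ℕ+} (h : ∀ a, (n a : ℕ) ∣ m₁)
    (hm : m₁.Coprime m₂) : (vertexNumProd v E k n).Coprime m₂ :=
  Nat.Coprime.prod_left fun _ _ => Nat.Coprime.coprime_dvd_left (Finset.lcm_dvd fun a _ => h a) hm

theorem CGk_zero : CGk v E k 0 = 0 :=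
  finsum_eq_zero_of_forall_eq_zero fun n => if_neg (vertexNumProd_ne_zero n)

theorem CGk_eq_sum (hE : ∀ a ∈ E, ¬ a.IsDiag) {m : ℕ} (hm : m ≠ 0) :
    CGk v E k m = ∑ n ∈ piDivisors E m,
      if vertexNumProd v E k n = m then |∏ a, (μ (n a : ℕ) : ℝ)| else 0 := by
  refine finsum_eq_finsetSum_of_support_subset _ fun n hn => ?_
  obtain ⟨hnm, -⟩ := not_forall.1 (mt ite_eq_right_iff.2 hn)
  exact (mem_piDivisors hm).2 fun a => hnm ▸ dvd_vertexNumProd hE n a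

theorem CGk_mul (hE : ∀ a ∈ E, ¬ a.IsDiag) {m₁ m₂ : ℕ} (h : m₁.Coprime m₂) :
    CGk v E k (m₁ * m₂) = CGk v E k m₁ * CGk v E k m₂ := by
  rcases eq_or_ne m₁ 0 with rfl | hm₁
  · rw [zero_mul, CGk_zero, zero_mul]
  rcases eq_or_ne m₂ 0 with rfl | hm₂
  · rw [mul_zero, CGk_zero, mul_zero]
  rw [CGk_eq_sum hE (mul_ne_zero hm₁ hm₂), CGk_eq_sum hE hm₁, CGk_eq_sum hE hm₂,
    sum_piDivisors_mul h hm₁ hm₂, Finset.sum_mul_sum, ← Finset.sum_product']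
  refine Finset.sum_congr rfl fun q hq => ?_
  rw [mem_product, mem_piDivisors hm₁, mem_piDivisors hm₂] at hq
  obtain ⟨h₁, h₂⟩ := hq
  rw [ite_zero_mul_ite_zero, vertexNumProd_mul h h₁ h₂]
  simp only [(coprime_vertexNumProd h₁ h).mul_eq_mul_iff_s12 (coprime_vertexNumProd h₂ h.symm),
    abs_prod_moebius_mul fun a => Nat.Coprime.coprime_dvd_left (h₁ a) (h.coprime_dvd_right (h₂ a))]

def incidentVertices (k : Fin v) (n : E → ℕ+) (x : ℕ+) : Finset (Fin v) :=
  (univ.erase k).filter fun r => ∃ a : E, r ∈ a.1 ∧ n a = x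

theorem vertexNum_of_forall_eq_one_or_eq {n : E → ℕ+} {x : ℕ+} (hn : ∀ a, n a = 1 ∨ n a = x)
    (r : Fin v) : vertexNum v E n r = if ∃ a : E, r ∈ a.1 ∧ n a = x then (x : ℕ) else 1 := by
  split_ifs with hr
  · obtain ⟨a, hra, hax⟩ := hr
    refine Nat.dvd_antisymm (Finset.lcm_dvd fun b _ => ?_) ?_
    · rcases hn b with hb | hb <;> simp [hb]
    · exact hax ▸ Finset.dvd_lcm (mem_filter.2 ⟨mem_attach _ _, hra⟩)
  · refine Nat.dvd_one.1 (Finset.lcm_dvd fun b hb => ?_)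
    rw [(hn b).resolve_right fun hbx => hr ⟨b, (mem_filter.1 hb).2, hbx⟩, PNat.one_coe]

theorem vertexNumProd_eq_pow_card {n : E → ℕ+} {x : ℕ+} (hn : ∀ a, n a = 1 ∨ n a = x) :
    vertexNumProd v E k n = (x : ℕ) ^ #(incidentVertices k n x) := by
  rw [vertexNumProd, Finset.prod_congr rfl fun r _ => vertexNum_of_forall_eq_one_or_eq hn r,
    Finset.prod_ite, prod_const, prod_const_one, mul_one, incidentVertices]

theorem card_incidentVertices_mulSingle (hE : ∀ a ∈ E, ¬ a.IsDiag) {b : E} (hkb : k ∈ b.1)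
    {x : ℕ+} (hx : x ≠ 1) : #(incidentVertices k (Pi.mulSingle b x) x) = 1 := by
  obtain ⟨r₀, hb⟩ := Sym2.mem_iff_exists.1 hkb
  have hr₀ : r₀ ≠ k := fun h => hE b b.2 (by rw [hb, h]; exact Sym2.mk_isDiag_iff.2 rfl)
  refine card_eq_one.2 ⟨r₀, Finset.ext fun r => ?_⟩
  simp only [incidentVertices, mem_filter, mem_erase, mem_univ, and_true, Pi.mulSingle_apply,
    ite_eq_left_iff, hx.symm, imp_false, not_not, exists_eq_right, hb, Sym2.mem_iff, mem_singleton]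
  grind

theorem eq_mulSingle_of_incidentVertices_eq_singleton (hE : ∀ a ∈ E, ¬ a.IsDiag) {n : E → ℕ+}
    {x : ℕ+} (hn : ∀ a, n a = 1 ∨ n a = x) {r₀ : Fin v} (hT : incidentVertices k n x = {r₀}) :
    ∃ b : E, k ∈ b.1 ∧ n = Pi.mulSingle b x := by
  have hmem : ∀ r, r ≠ k → (∃ a : E, r ∈ a.1 ∧ n a = x) → r = r₀ := fun r hrk h =>
    mem_singleton.1 (hT ▸ mem_filter.2 ⟨mem_erase.2 ⟨hrk, mem_univ r⟩, h⟩)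
  have hedge : ∀ a : E, n a = x → a.1 = s(k, r₀) := fun a hax =>
    Sym2.eq_mk_of_forall_mem (hE a a.2) fun r hr =>
      (eq_or_ne r k).imp_right fun hrk => hmem r hrk ⟨a, hr, hax⟩
  have hr₀ : r₀ ∈ incidentVertices k n x := hT ▸ mem_singleton_self r₀
  obtain ⟨a₀, -, ha₀⟩ := (mem_filter.1 hr₀).2
  refine ⟨a₀, hedge a₀ ha₀ ▸ Sym2.mem_mk_left k r₀, funext fun a => ?_⟩
  rcases eq_or_ne a a₀ with rfl | ha
  · rw [Pi.mulSingle_eq_same, ha₀]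
  · rw [Pi.mulSingle_eq_of_ne ha]
    exact (hn a).resolve_right fun hax => ha (Subtype.ext ((hedge a hax).trans (hedge a₀ ha₀).symm))

theorem vertexNumProd_eq_prime_iff (hE : ∀ a ∈ E, ¬ a.IsDiag) {x : ℕ+} (hx : (x : ℕ).Prime)
    {n : E → ℕ+} : vertexNumProd v E k n = x ↔ ∃ b : E, k ∈ b.1 ∧ n = Pi.mulSingle b x := by
  constructor
  · intro hn
    have hval : ∀ a, n a = 1 ∨ n a = x := fun a =>
      (hx.eq_one_or_self_of_dvd _ (hn ▸ dvd_vertexNumProd hE n a)).imp PNat.coe_eq_one_iff.1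
        fun h => PNat.coe_injective h
    rw [vertexNumProd_eq_pow_card hval, Nat.pow_eq_self_iff hx.one_lt, card_eq_one] at hn
    obtain ⟨r₀, hr₀⟩ := hn
    exact eq_mulSingle_of_incidentVertices_eq_singleton hE hval hr₀
  · rintro ⟨b, hkb, rfl⟩
    have hval (a : E) : (Pi.mulSingle b x : E → ℕ+) a = 1 ∨ (Pi.mulSingle b x : E → ℕ+) a = x := by
      rw [Pi.mulSingle_apply]; split_ifs <;> simp
    rw [vertexNumProd_eq_pow_card hval,
      card_incidentVertices_mulSingle hE hkb fun h => hx.ne_one (by rw [h, PNat.one_coe]), pow_one]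

theorem CGk_prime (hE : ∀ a ∈ E, ¬ a.IsDiag) {p : ℕ} (hp : p.Prime) :
    CGk v E k p = #(E.filter (k ∈ ·)) := by
  lift p to ℕ+ using hp.pos
  have hp1 : p ≠ 1 := fun h => hp.ne_one (by rw [h, PNat.one_coe])
  have hsupp : Function.support (fun n : E → ℕ+ => if vertexNumProd v E k n = p then
      |∏ a, (μ (n a : ℕ) : ℝ)| else 0) ⊆
      ((univ : Finset E).filter (k ∈ ·.1)).image (Pi.mulSingle · p) := fun n hn => by
    obtain ⟨hnp, -⟩ := not_forall.1 (mt ite_eq_right_iff.2 hn)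
    obtain ⟨b, hkb, rfl⟩ := (vertexNumProd_eq_prime_iff hE hp).1 hnp
    exact mem_image_of_mem _ (mem_filter.2 ⟨mem_univ b, hkb⟩)
  refine (finsum_eq_finsetSum_of_support_subset _ hsupp).trans ?_
  rw [sum_image fun b _ b' _ h => Pi.mulSingle_left_injective hp1 h, sum_congr rfl fun b hb => by
    rw [if_pos ((vertexNumProd_eq_prime_iff hE hp).2 ⟨b, (mem_filter.1 hb).2, rfl⟩),
      abs_prod_moebius_mulSingle, moebius_apply_prime hp]]
  simp only [Int.cast_neg, Int.cast_one, abs_neg, abs_one, sum_const, nsmul_eq_mul, mul_one]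
  rw [univ_eq_attach, filter_attach (k ∈ ·), card_map, card_attach]

end Graph

/-- For any vertex `k`, the function `C_{G,k}` is multiplicative and,
for every prime `p`, `C_{G,k}(p) = h_k`, the degree of the vertex `k` in the graph. -/
theorem stmt12 (v : ℕ) (E : Finset (Sym2 (Fin v))) (hE : ∀ a ∈ E, ¬ a.IsDiag) (k : Fin v) :
    (∀ m₁ m₂ : ℕ, Nat.Coprime m₁ m₂ →
      CGk v E k (m₁ * m₂) = CGk v E k m₁ * CGk v E k m₂) ∧
    ∀ p : ℕ, p.Prime → CGk v E k p = ((E.filter fun a => k ∈ a).card : ℝ) :=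
  ⟨fun _ _ h => CGk_mul hE h, fun _ hp => CGk_prime hE hp⟩
end
end

section
/- Let G be a graph whose edges are labeled e_1 = {r,s}, e_2, …, e_e, and define f_{G,e}(n) = Σ_{d_2 | n} ⋯ Σ_{d_e | n} |μ(d_2)⋯μ(d_e)| ∏_{1 ≤ t ≤ v, t ≠ r, t ≠ s} 1/[d_{t_1},…,d_{t_m}], where for each vertex t ∉ {r,s} the bracket is the lcm of those d_j whose edge e_j is incident to t (equal to 1 if no such edge exists). Then f_{G,e} is multiplicative, and f_{G,e}(p^k) = f_{G,e}(p) for every prime p and every integer k ≥ 2. -/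
open scoped BigOperators Classical

noncomputable section

/-- `f_{G,e}(n) = Σ_{d_2 ∣ n} ⋯ Σ_{d_e ∣ n} |μ(d_2) ⋯ μ(d_e)|
∏_{1 ≤ t ≤ v, t ≠ r, t ≠ s} 1/[d_{t_1}, …, d_{t_m}]`, where the distinguished first edge
is `e_1 = {r, s}`, the remaining edges are the elements of `E.erase s(r, s)`, each of which
carries a divisor `d_a` of `n`, and for each vertex `t ∉ {r, s}` the bracket is the lcm of
the `d_a` over the edges `a ≠ e_1` incident to `t` (equal to `1` if there is no such edge). -/
def fGe (v : ℕ) (E : Finset (Sym2 (Fin v))) (r s : Fin v) (n : ℕ) : ℝ :=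
  ∑ d ∈ Fintype.piFinset
      (fun _ : {a : Sym2 (Fin v) // a ∈ E.erase s(r, s)} => n.divisors),
    (∏ a, |(ArithmeticFunction.moebius (d a) : ℝ)|) *
      ∏ t ∈ (Finset.univ.erase r).erase s,
        ((((E.erase s(r, s)).attach.filter fun a => t ∈ a.1).lcm fun a => d a : ℕ) : ℝ)⁻¹

/-- lcm splits along a coprime factorization. -/
lemma lcm_split_aux {ι : Type*} (S : Finset ι) (d₁ d₂ : ι → ℕ) {m₁ m₂ : ℕ}
    (h : Nat.Coprime m₁ m₂) (h₁ : ∀ a ∈ S, d₁ a ∣ m₁) (h₂ : ∀ a ∈ S, d₂ a ∣ m₂) :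
    S.lcm (fun a => d₁ a * d₂ a) = S.lcm d₁ * S.lcm d₂ := by
  have hL₁ : S.lcm d₁ ∣ m₁ := Finset.lcm_dvd h₁
  have hL₂ : S.lcm d₂ ∣ m₂ := Finset.lcm_dvd h₂
  have hcop : Nat.Coprime (S.lcm d₁) (S.lcm d₂) :=
    Nat.Coprime.coprime_dvd_left hL₁ (Nat.Coprime.coprime_dvd_right hL₂ h)
  apply Nat.dvd_antisymm
  · exact Finset.lcm_dvd fun a ha =>
      mul_dvd_mul (Finset.dvd_lcm ha) (Finset.dvd_lcm ha)
  · refine hcop.mul_dvd_of_dvd_of_dvd ?_ ?_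
    · exact Finset.lcm_dvd fun a ha => (dvd_mul_right _ _).trans (Finset.dvd_lcm ha)
    · exact Finset.lcm_dvd fun a ha => (dvd_mul_left _ _).trans (Finset.dvd_lcm ha)

/-- `f_{G,e}` is multiplicative, and `f_{G,e}(p^k) = f_{G,e}(p)` for
every prime `p` and every `k ≥ 2`. -/
theorem stmt16 (v : ℕ) (E : Finset (Sym2 (Fin v))) (hE : ∀ a ∈ E, ¬ a.IsDiag)
    (r s : Fin v) (hrs : r ≠ s) (he : s(r, s) ∈ E) :
    (∀ m₁ m₂ : ℕ, Nat.Coprime m₁ m₂ →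
      fGe v E r s (m₁ * m₂) = fGe v E r s m₁ * fGe v E r s m₂) ∧
    ∀ p k : ℕ, p.Prime → 2 ≤ k → fGe v E r s (p ^ k) = fGe v E r s p := by
  constructor
  · intro m₁ m₂ hco
    simp only [fGe]
    rw [Finset.sum_mul_sum, ← Finset.sum_product']
    refine Finset.sum_nbij'
      (i := fun d => (fun a => (d a).gcd m₁, fun a => (d a).gcd m₂))
      (j := fun d => fun a => d.1 a * d.2 a) ?_ ?_ ?_ ?_ ?_
    · intro d hd
      rw [Fintype.mem_piFinset] at hd
      rw [Finset.mem_product, Fintype.mem_piFinset, Fintype.mem_piFinset]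
      constructor <;> intro a <;>
        obtain ⟨hdvd, hne⟩ := Nat.mem_divisors.mp (hd a) <;>
        obtain ⟨h1, h2⟩ := mul_ne_zero_iff.mp hne
      · exact Nat.mem_divisors.mpr ⟨Nat.gcd_dvd_right _ _, h1⟩
      · exact Nat.mem_divisors.mpr ⟨Nat.gcd_dvd_right _ _, h2⟩
    · intro d hd
      rw [Finset.mem_product, Fintype.mem_piFinset, Fintype.mem_piFinset] at hd
      rw [Fintype.mem_piFinset]
      intro a
      obtain ⟨hm1, hne1⟩ := Nat.mem_divisors.mp (hd.1 a)
      obtain ⟨hm2, hne2⟩ := Nat.mem_divisors.mp (hd.2 a)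
      exact Nat.mem_divisors.mpr ⟨mul_dvd_mul hm1 hm2, mul_ne_zero hne1 hne2⟩
    · intro d hd
      rw [Fintype.mem_piFinset] at hd
      funext a
      exact (Nat.gcd_mul_gcd_eq_iff_dvd_mul_of_coprime hco).mpr
        (Nat.dvd_of_mem_divisors (hd a))
    · intro d hd
      rw [Finset.mem_product, Fintype.mem_piFinset, Fintype.mem_piFinset] at hd
      have hm1 : ∀ a, d.1 a ∣ m₁ := fun a => Nat.dvd_of_mem_divisors (hd.1 a)
      have hm2 : ∀ a, d.2 a ∣ m₂ := fun a => Nat.dvd_of_mem_divisors (hd.2 a)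
      refine Prod.ext ?_ ?_ <;> funext a
      · have c : Nat.Coprime (d.2 a) m₁ :=
          Nat.Coprime.coprime_dvd_left (hm2 a) hco.symm
        simp only []
        rw [Nat.Coprime.gcd_mul_right_cancel _ c, Nat.gcd_eq_left (hm1 a)]
      · have c : Nat.Coprime (d.1 a) m₂ :=
          Nat.Coprime.coprime_dvd_left (hm1 a) hco
        simp only []
        rw [Nat.Coprime.gcd_mul_left_cancel _ c, Nat.gcd_eq_left (hm2 a)]
    · intro d hd
      rw [Fintype.mem_piFinset] at hd
      set d₁ : {a : Sym2 (Fin v) // a ∈ E.erase s(r, s)} → ℕ :=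
        fun a => (d a).gcd m₁ with hd₁
      set d₂ : {a : Sym2 (Fin v) // a ∈ E.erase s(r, s)} → ℕ :=
        fun a => (d a).gcd m₂ with hd₂
      have hdvd₁ : ∀ a, d₁ a ∣ m₁ := fun a => Nat.gcd_dvd_right _ _
      have hdvd₂ : ∀ a, d₂ a ∣ m₂ := fun a => Nat.gcd_dvd_right _ _
      have hsplit : ∀ a, d a = d₁ a * d₂ a := fun a =>
        ((Nat.gcd_mul_gcd_eq_iff_dvd_mul_of_coprime hco).mpr
          (Nat.dvd_of_mem_divisors (hd a))).symm
      have hcopa : ∀ a, Nat.Coprime (d₁ a) (d₂ a) := fun a =>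
        Nat.Coprime.coprime_dvd_left (hdvd₁ a)
          (Nat.Coprime.coprime_dvd_right (hdvd₂ a) hco)
      have hmu : ∀ a, |(ArithmeticFunction.moebius (d a) : ℝ)| =
          |(ArithmeticFunction.moebius (d₁ a) : ℝ)| *
          |(ArithmeticFunction.moebius (d₂ a) : ℝ)| := by
        intro a
        rw [hsplit a, ArithmeticFunction.IsMultiplicative.map_mul_of_coprime
          ArithmeticFunction.isMultiplicative_moebius (hcopa a)]
        push_cast
        rw [abs_mul]
      have hlcm : ∀ T : Finset {a : Sym2 (Fin v) // a ∈ E.erase s(r, s)},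
          (T.lcm fun a => d a) = T.lcm d₁ * T.lcm d₂ := by
        intro T
        rw [show (fun a => d a) = fun a => d₁ a * d₂ a from funext hsplit]
        exact lcm_split_aux T d₁ d₂ hco (fun a _ => hdvd₁ a) (fun a _ => hdvd₂ a)
      have hinv : ∀ t : Fin v,
          (((((E.erase s(r, s)).attach.filter fun a => t ∈ a.1).lcm
              fun a => d a : ℕ)) : ℝ)⁻¹ =
          (((((E.erase s(r, s)).attach.filter fun a => t ∈ a.1).lcm d₁ : ℕ)) : ℝ)⁻¹ *
          (((((E.erase s(r, s)).attach.filter fun a => t ∈ a.1).lcm d₂ : ℕ)) : ℝ)⁻¹ := by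
        intro t
        rw [hlcm]
        push_cast
        rw [mul_inv]
      rw [Finset.prod_congr rfl (fun a _ => hmu a), Finset.prod_mul_distrib,
        Finset.prod_congr rfl (fun t _ => hinv t), Finset.prod_mul_distrib]
      ring
  · intro p k hp hk
    have hk0 : k ≠ 0 := by omega
    have hsub : p.divisors ⊆ (p ^ k).divisors := by
      intro x hx
      rw [Nat.mem_divisors] at hx ⊢
      exact ⟨hx.1.trans (dvd_pow_self p hk0), pow_ne_zero k hp.pos.ne'⟩
    simp only [fGe]
    refine (Finset.sum_subset (Fintype.piFinset_subset _ _ fun _ => hsub) ?_).symm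
    intro d hd hnd
    rw [Fintype.mem_piFinset] at hd hnd
    push_neg at hnd
    obtain ⟨a, ha⟩ := hnd
    have h1 : d a ∣ p ^ k := Nat.dvd_of_mem_divisors (hd a)
    have h2 : ¬ d a ∣ p := fun h => ha (Nat.mem_divisors.mpr ⟨h, hp.pos.ne'⟩)
    obtain ⟨j, hj, hje⟩ := (Nat.dvd_prime_pow hp).mp h1
    have hj2 : 2 ≤ j := by
      by_contra h
      push_neg at h
      interval_cases j <;> simp_all
    have hnsq : ¬ Squarefree (d a) := by
      rw [hje]
      intro hsq
      have hpp : p * p ∣ p ^ j := by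
        have : p ^ 2 ∣ p ^ j := pow_dvd_pow p hj2
        rwa [pow_two] at this
      exact hp.ne_one (Nat.isUnit_iff.mp (hsq p hpp))
    have hmu0 : ArithmeticFunction.moebius (d a) = 0 :=
      ArithmeticFunction.moebius_eq_zero_of_not_squarefree hnsq
    rw [Finset.prod_eq_zero (Finset.mem_univ a) (by simp [hmu0]), zero_mul]
end
end

section
/- Let G be a graph whose edges are labeled e_1 = {r,s}, e_2, …, e_e, and let f_{G,e} be defined by f_{G,e}(n) = Σ_{d_2 | n} ⋯ Σ_{d_e | n} |μ(d_2)⋯μ(d_e)| ∏_{1 ≤ t ≤ v, t ≠ r, t ≠ s} 1/[d_{t_1},…,d_{t_m}], where for each vertex t ∉ {r,s} the bracket is the lcm of those d_j whose edge e_j is incident to t (equal to 1 if no such edge exists). Then there exists a positive integer w, depending only on G, such that for every squarefree n ≥ 1, f_{G,e}(n) ≤ ∏_{p | n} (1 + 1/p)^w = (σ(n)/n)^w. -/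
open scoped BigOperators Classical
open Finset

noncomputable section

lemma lemA {n : ℕ} (hn : Squarefree n) (c : ℕ → ℝ) :
    ∑ D ∈ n.divisors, ∏ p ∈ D.primeFactors, c p
      = ∏ p ∈ n.primeFactors, (1 + c p) := by
  have hn0 : n ≠ 0 := hn.ne_zero
  have h1 : ∏ p ∈ n.primeFactors, (1 + c p) = ∏ p ∈ n.primeFactors, (c p + 1) := by
    simp [add_comm]
  rw [h1, Finset.prod_add]
  simp only [Finset.prod_const_one, mul_one]
  refine Finset.sum_nbij' (i := fun (D : ℕ) => D.primeFactors)
    (j := fun (S : Finset ℕ) => ∏ p ∈ S, p) ?_ ?_ ?_ ?_ ?_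
  · intro D hD
    rw [Finset.mem_powerset]
    exact Nat.primeFactors_mono (Nat.mem_divisors.mp hD).1 hn0
  · intro S hS
    rw [Finset.mem_powerset] at hS
    rw [Nat.mem_divisors]
    refine ⟨?_, hn0⟩
    calc ∏ p ∈ S, p ∣ ∏ p ∈ n.primeFactors, p :=
          Finset.prod_dvd_prod_of_subset _ _ _ hS
      _ = n := Nat.prod_primeFactors_of_squarefree hn
  · intro D hD
    exact Nat.prod_primeFactors_of_squarefree (hn.squarefree_of_dvd (Nat.mem_divisors.mp hD).1)
  · intro S hS
    rw [Finset.mem_powerset] at hS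
    exact Nat.primeFactors_prod (fun p hp => Nat.prime_of_mem_primeFactors (hS hp))
  · intro D hD; rfl

lemma endpointLem {v : ℕ} {E : Finset (Sym2 (Fin v))} (hE : ∀ a ∈ E, ¬ a.IsDiag)
    {r s : Fin v} (a : Sym2 (Fin v)) (ha : a ∈ E.erase s(r, s)) :
    ∃ t : Fin v, t ∈ a ∧ t ≠ r ∧ t ≠ s := by
  obtain ⟨hne, haE⟩ := Finset.mem_erase.mp ha
  have hnd := hE a haE
  induction a using Sym2.ind with
  | _ x y =>
    have hxy : x ≠ y := by
      intro h; exact hnd (Sym2.mk_isDiag_iff.mpr h)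
    by_cases hxr : x = r
    · by_cases hys : y = s
      · exact absurd (by rw [hxr, hys]) hne
      · by_cases hyr : y = r
        · exact absurd (hxr.trans hyr.symm) hxy
        · exact ⟨y, Sym2.mem_mk_right x y, hyr, hys⟩
    · by_cases hxs : x = s
      · by_cases hyr : y = r
        · exact absurd (by rw [hxs, hyr, Sym2.eq_swap]) hne
        · by_cases hys : y = s
          · exact absurd (hxs.trans hys.symm) hxy
          · exact ⟨y, Sym2.mem_mk_right x y, hyr, hys⟩
      · exact ⟨x, Sym2.mem_mk_left x y, hxr, hxs⟩

lemma cardDivSf {D : ℕ} (hD : Squarefree D) :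
    D.divisors.card = 2 ^ D.primeFactors.card := by
  rw [Nat.card_divisors hD.ne_zero]
  rw [← Finset.prod_const]
  exact Finset.prod_congr rfl fun p hp => by
    rw [Nat.factorization_eq_one_of_squarefree hD (Nat.prime_of_mem_primeFactors hp)
      (Nat.dvd_of_mem_primeFactors hp)]

/-- The core analytic bound, with an abstract index type. -/
lemma keyLem {ι : Type*} [DecidableEq ι] [Fintype ι] {n : ℕ} (hsf : Squarefree n) :
    (∑ d ∈ Fintype.piFinset (fun _ : ι => n.divisors),
        (((Finset.univ.lcm d : ℕ)) : ℝ)⁻¹)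
      ≤ ∏ p ∈ n.primeFactors, (1 + 1 / (p : ℝ)) ^ (2 ^ Fintype.card ι) := by
  classical
  have hn0 : n ≠ 0 := hsf.ne_zero
  set m := Fintype.card ι with hm
  have hmap : ∀ d ∈ Fintype.piFinset (fun _ : ι => n.divisors),
      (Finset.univ.lcm d) ∈ n.divisors := by
    intro d hd
    rw [Nat.mem_divisors]
    exact ⟨Finset.lcm_dvd fun a _ =>
      (Nat.mem_divisors.mp (Fintype.mem_piFinset.mp hd a)).1, hn0⟩
  have key2 : (∑ d ∈ Fintype.piFinset (fun _ : ι => n.divisors),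
        (((Finset.univ.lcm d : ℕ)) : ℝ)⁻¹)
      ≤ ∑ D ∈ n.divisors, ((2 : ℝ) ^ m) ^ D.primeFactors.card / D := by
    rw [← Finset.sum_fiberwise_of_maps_to hmap]
    apply Finset.sum_le_sum
    intro D hD
    have hDsf : Squarefree D := hsf.squarefree_of_dvd (Nat.mem_divisors.mp hD).1
    have hD0 : 0 < D := Nat.pos_of_mem_divisors hD
    have hcard : ((Fintype.piFinset (fun _ : ι => n.divisors)).filter
        (fun d => Finset.univ.lcm d = D)).card ≤ (2 ^ m) ^ D.primeFactors.card := by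
      calc _ ≤ (Fintype.piFinset (fun _ : ι => D.divisors)).card := by
            apply Finset.card_le_card
            intro d hd
            obtain ⟨hd1, hd2⟩ := Finset.mem_filter.mp hd
            rw [Fintype.mem_piFinset]
            intro a
            rw [Nat.mem_divisors]
            exact ⟨hd2 ▸ Finset.dvd_lcm (Finset.mem_univ a), hD0.ne'⟩
        _ = D.divisors.card ^ m := by
            rw [Fintype.card_piFinset, Finset.prod_const, Finset.card_univ]
        _ = (2 ^ D.primeFactors.card) ^ m := by rw [cardDivSf hDsf]
        _ = (2 ^ m) ^ D.primeFactors.card := by rw [← pow_mul, mul_comm, pow_mul]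
    calc (∑ d ∈ (Fintype.piFinset (fun _ : ι => n.divisors)).filter
          (fun d => Finset.univ.lcm d = D), (((Finset.univ.lcm d : ℕ)) : ℝ)⁻¹)
        = ∑ d ∈ (Fintype.piFinset (fun _ : ι => n.divisors)).filter
          (fun d => Finset.univ.lcm d = D), ((D : ℝ))⁻¹ :=
          Finset.sum_congr rfl fun d hd => by rw [(Finset.mem_filter.mp hd).2]
      _ = ((Fintype.piFinset (fun _ : ι => n.divisors)).filter
          (fun d => Finset.univ.lcm d = D)).card * ((D : ℝ))⁻¹ := by
          rw [Finset.sum_const, nsmul_eq_mul]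
      _ ≤ ((2 ^ m) ^ D.primeFactors.card : ℕ) * ((D : ℝ))⁻¹ := by
          apply mul_le_mul_of_nonneg_right _ (by positivity)
          exact_mod_cast hcard
      _ = ((2 : ℝ) ^ m) ^ D.primeFactors.card / D := by
          push_cast
          rw [div_eq_mul_inv]
  have key3 : ∑ D ∈ n.divisors, ((2 : ℝ) ^ m) ^ D.primeFactors.card / D
      = ∏ p ∈ n.primeFactors, (1 + (2 : ℝ) ^ m / p) := by
    rw [← lemA hsf (fun p => (2 : ℝ) ^ m / p)]
    refine Finset.sum_congr rfl fun D hD => ?_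
    have hDsf : Squarefree D := hsf.squarefree_of_dvd (Nat.mem_divisors.mp hD).1
    rw [Finset.prod_div_distrib, Finset.prod_const]
    congr 1
    rw [← Nat.cast_prod, Nat.prod_primeFactors_of_squarefree hDsf]
  have key4 : ∏ p ∈ n.primeFactors, (1 + (2 : ℝ) ^ m / p)
      ≤ ∏ p ∈ n.primeFactors, (1 + 1 / (p : ℝ)) ^ (2 ^ m) := by
    apply Finset.prod_le_prod
    · intro p hp; positivity
    · intro p hp
      have hp0 : (0 : ℝ) < p := by
        exact_mod_cast (Nat.prime_of_mem_primeFactors hp).pos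
      have h00 : (0 : ℝ) ≤ 1 / (p : ℝ) := by positivity
      have hneg2 : (-2 : ℝ) ≤ 1 / (p : ℝ) := by linarith
      have hber := one_add_mul_le_pow hneg2 (2 ^ m)
      calc 1 + (2 : ℝ) ^ m / p = 1 + ((2 ^ m : ℕ) : ℝ) * (1 / p) := by push_cast; ring
        _ ≤ (1 + 1 / (p : ℝ)) ^ (2 ^ m) := hber
  calc (∑ d ∈ Fintype.piFinset (fun _ : ι => n.divisors),
        (((Finset.univ.lcm d : ℕ)) : ℝ)⁻¹) ≤ _ := key2
    _ = _ := key3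
    _ ≤ _ := key4

set_option maxHeartbeats 2000000 in
lemma fGe_le (v : ℕ) (E : Finset (Sym2 (Fin v))) (hE : ∀ a ∈ E, ¬ a.IsDiag)
    (r s : Fin v) {n : ℕ} (hsf : Squarefree n) :
    fGe v E r s n ≤
      ∑ d ∈ Fintype.piFinset
        (fun _ : {a : Sym2 (Fin v) // a ∈ E.erase s(r, s)} => n.divisors),
          (((Finset.univ.lcm d : ℕ)) : ℝ)⁻¹ := by
  unfold fGe
  apply Finset.sum_le_sum
  intro d hd
  have hdmem : ∀ a : {a : Sym2 (Fin v) // a ∈ E.erase s(r, s)}, d a ∈ n.divisors :=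
    fun a => (Fintype.mem_piFinset.mp hd) a
  have hd0 : ∀ a : {a : Sym2 (Fin v) // a ∈ E.erase s(r, s)}, d a ≠ 0 :=
    fun a => (Nat.pos_of_mem_divisors (hdmem a)).ne'
  have hmu : (∏ a : {a : Sym2 (Fin v) // a ∈ E.erase s(r, s)},
      |((ArithmeticFunction.moebius (d a) : ℤ) : ℝ)|) = 1 := by
    apply Finset.prod_eq_one
    intro a _
    have hsq : Squarefree (d a) := hsf.squarefree_of_dvd (Nat.mem_divisors.mp (hdmem a)).1
    rw [← Int.cast_abs, ArithmeticFunction.abs_moebius_eq_one_of_squarefree hsq, Int.cast_one]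
  rw [hmu, one_mul]
  have hlcmpos : ∀ t ∈ (Finset.univ.erase r).erase s,
      0 < (((E.erase s(r, s)).attach.filter fun a => t ∈ a.1).lcm fun a => d a) := by
    intro t _
    rcases Nat.eq_zero_or_pos (((E.erase s(r, s)).attach.filter fun a => t ∈ a.1).lcm
      fun a => d a) with h | h
    · exfalso
      rw [Finset.lcm_eq_zero_iff] at h
      obtain ⟨a, _, ha0⟩ := h
      exact hd0 a (by simpa using ha0)
    · exact h
  have hdvd : (Finset.univ.lcm d) ∣
      ∏ t ∈ (Finset.univ.erase r).erase s,
        (((E.erase s(r, s)).attach.filter fun a => t ∈ a.1).lcm fun a => d a) := by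
    apply Finset.lcm_dvd
    intro a _
    obtain ⟨t, hta, htr, hts⟩ := endpointLem hE a.1 a.2
    have htT : t ∈ (Finset.univ.erase r).erase s := by
      rw [Finset.mem_erase, Finset.mem_erase]
      exact ⟨hts, htr, Finset.mem_univ t⟩
    calc d a ∣ (((E.erase s(r, s)).attach.filter fun a => t ∈ a.1).lcm fun a => d a) :=
          Finset.dvd_lcm (Finset.mem_filter.mpr ⟨Finset.mem_attach _ a, hta⟩)
      _ ∣ _ := Finset.dvd_prod_of_mem
            (fun t => (((E.erase s(r, s)).attach.filter fun a => t ∈ a.1).lcm fun a => d a)) htT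
  have hprodpos : 0 < ∏ t ∈ (Finset.univ.erase r).erase s,
      (((E.erase s(r, s)).attach.filter fun a => t ∈ a.1).lcm fun a => d a) :=
    Finset.prod_pos hlcmpos
  have hL0 : 0 < (Finset.univ.lcm d) := by
    rcases Nat.eq_zero_or_pos (Finset.univ.lcm d) with h | h
    · exfalso; rw [h] at hdvd; exact absurd (Nat.eq_zero_of_zero_dvd hdvd) hprodpos.ne'
    · exact h
  calc (∏ t ∈ (Finset.univ.erase r).erase s,
        ((((E.erase s(r, s)).attach.filter fun a => t ∈ a.1).lcm fun a => d a : ℕ) : ℝ)⁻¹)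
      = ((↑(∏ t ∈ (Finset.univ.erase r).erase s,
          (((E.erase s(r, s)).attach.filter fun a => t ∈ a.1).lcm fun a => d a)) : ℝ))⁻¹ := by
        rw [Nat.cast_prod, ← Finset.prod_inv_distrib]
    _ ≤ (((Finset.univ.lcm d : ℕ)) : ℝ)⁻¹ := by
        apply inv_anti₀
        · exact_mod_cast hL0
        · exact_mod_cast Nat.le_of_dvd hprodpos hdvd

set_option maxHeartbeats 2000000 in
/-- There is a positive integer `w`, depending only on the graph, such
that for every squarefree `n ≥ 1` one has
`f_{G,e}(n) ≤ ∏_{p ∣ n} (1 + 1/p)^w = (σ(n)/n)^w`. -/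
theorem stmt17 (v : ℕ) (E : Finset (Sym2 (Fin v))) (hE : ∀ a ∈ E, ¬ a.IsDiag)
    (r s : Fin v) (hrs : r ≠ s) (he : s(r, s) ∈ E) :
    ∃ w : ℕ, 0 < w ∧ ∀ n : ℕ, 1 ≤ n → Squarefree n →
      fGe v E r s n ≤ ∏ p ∈ n.primeFactors, (1 + 1 / (p : ℝ)) ^ w ∧
      ∏ p ∈ n.primeFactors, (1 + 1 / (p : ℝ)) ^ w =
        ((∑ d ∈ n.divisors, (d : ℝ)) / n) ^ w := by
  refine ⟨2 ^ Fintype.card {a : Sym2 (Fin v) // a ∈ E.erase s(r, s)},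
    Nat.two_pow_pos _, ?_⟩
  intro n hn1 hsf
  have hn0 : n ≠ 0 := by omega
  constructor
  · exact le_trans (fGe_le v E hE r s hsf)
      (keyLem (ι := {a : Sym2 (Fin v) // a ∈ E.erase s(r, s)}) hsf)
  · rw [Finset.prod_pow]
    congr 1
    have hσ : ∑ D ∈ n.divisors, (D : ℝ) = ∏ p ∈ n.primeFactors, (1 + (p : ℝ)) := by
      rw [← lemA hsf (fun p => (p : ℝ))]
      exact Finset.sum_congr rfl fun D hD => by
        rw [← Nat.cast_prod, Nat.prod_primeFactors_of_squarefree
          (hsf.squarefree_of_dvd (Nat.mem_divisors.mp hD).1)]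
    have hnprod : ∏ p ∈ n.primeFactors, (p : ℝ) = (n : ℝ) := by
      rw [← Nat.cast_prod, Nat.prod_primeFactors_of_squarefree hsf]
    rw [hσ, ← hnprod, ← Finset.prod_div_distrib]
    refine Finset.prod_congr rfl fun p hp => ?_
    have hp0 : (p : ℝ) ≠ 0 := by
      exact_mod_cast (Nat.prime_of_mem_primeFactors hp).ne_zero
    field_simp
    ring
end
end
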